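/- arXiv:2603.25816 — 4 statements merged into one kernel-verified Lean document; each statement's English description precedes it below -/
import Mathlib

section
/- Under the time-varying certificate conditions (a)–(f) with horizon H, for every initial state x₀ ∈ X₀ the trajectory measure satisfies Pr^{x₀}(RA_H) ≥ γ − (α_H + Σ_{i=1}^{H} β_i); that is, the probability that the Markov chain started at x₀ reaches X_r within H steps while not entering X_u before reaching it is at least γ − (α_H + Σ_{i=1}^{H} β_i). -/
open MeasureTheory ProbabilityTheory Finset

attribute [local instance] Classical.propDecidable

/-- The reach-avoid value function `V_k` defined by the dynamic-programming recursion: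
`V_k(x) = 1` on `X_r`, `V_k(x) = 0` on `X_u = (X_s)ᶜ`, `V_0(x) = 0` on `X_s \\ X_r`, and
`V_k(x) = E[V_{k-1}(x') | x]` on `X_s \\ X_r` for `k ≥ 1` (assuming `X_r ⊆ X_s`). -/
noncomputable def reachAvoidValue {n : ℕ}
    (κ : Kernel (Fin n → ℝ) (Fin n → ℝ)) (Xs Xr : Set (Fin n → ℝ)) :
    ℕ → (Fin n → ℝ) → ℝ
  | 0, x => if x ∈ Xr then 1 else 0
  | k + 1, x =>
      if x ∈ Xr then 1
      else if x ∈ Xs then ∫ y, reachAvoidValue κ Xs Xr k y ∂(κ x)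
      else 0

/-- Prepend a state at time `0` to a trajectory. -/
def prependState {n : ℕ} (x : Fin n → ℝ) (ω : ℕ → (Fin n → ℝ)) : ℕ → (Fin n → ℝ)
  | 0 => x
  | k + 1 => ω k

/-- The reach-avoid event with horizon `H`: there is `k ≤ H` with `x_k ∈ X_r` and
`x_{k'} ∉ X_u = (X_s)ᶜ` for all `k' < k`. -/
def reachAvoidEvent {n : ℕ} (Xs Xr : Set (Fin n → ℝ)) (H : ℕ) :
    Set (ℕ → (Fin n → ℝ)) :=
  {ω | ∃ k ≤ H, ω k ∈ Xr ∧ ∀ k' < k, ω k' ∉ Xsᶜ}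

lemma measurable_prependState {n : ℕ} (x : Fin n → ℝ) : Measurable (prependState x) := by
  apply measurable_pi_lambda
  intro k
  cases k with
  | zero => exact measurable_const
  | succ k => exact measurable_pi_apply k

lemma measurableSet_reachAvoidEvent {n : ℕ} {Xs Xr : Set (Fin n → ℝ)}
    (hXs : MeasurableSet Xs) (hXr : MeasurableSet Xr) (H : ℕ) :
    MeasurableSet (reachAvoidEvent Xs Xr H) := by
  have : reachAvoidEvent Xs Xr H =
      ⋃ k, ⋃ _ : k ≤ H, ((fun ω : ℕ → (Fin n → ℝ) => ω k) ⁻¹' Xr ∩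
        ⋂ k', ⋂ _ : k' < k, (fun ω : ℕ → (Fin n → ℝ) => ω k') ⁻¹' Xs) := by
    ext ω
    simp [reachAvoidEvent]
    tauto
  rw [this]
  exact MeasurableSet.iUnion fun k => MeasurableSet.iUnion fun _ =>
    ((measurable_pi_apply k hXr).inter (MeasurableSet.iInter fun k' =>
      MeasurableSet.iInter fun _ => measurable_pi_apply k' hXs))

lemma bind_apply_aemeasurable {α β : Type*} [MeasurableSpace α] [MeasurableSpace β]
    {m : Measure α} {f : α → Measure β} {s : Set β} (hs : MeasurableSet s)
    (hf : AEMeasurable f m) : m.bind f s = ∫⁻ a, f a s ∂m := by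
  rw [Measure.bind, Measure.join_apply hs,
    lintegral_map' (Measure.measurable_coe hs).aemeasurable hf]

lemma prepend_preimage_mem {n : ℕ} {Xs Xr : Set (Fin n → ℝ)} {x : Fin n → ℝ}
    (hx : x ∈ Xr) (k : ℕ) :
    prependState x ⁻¹' reachAvoidEvent Xs Xr k = Set.univ := by
  ext ω
  simp only [Set.mem_preimage, Set.mem_univ, iff_true, reachAvoidEvent, Set.mem_setOf_eq]
  exact ⟨0, Nat.zero_le _, hx, fun k' h => absurd h (Nat.not_lt_zero _)⟩

lemma prepend_preimage_step {n : ℕ} {Xs Xr : Set (Fin n → ℝ)} {x : Fin n → ℝ}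
    (hx1 : x ∈ Xs) (hx2 : x ∉ Xr) (k : ℕ) :
    prependState x ⁻¹' reachAvoidEvent Xs Xr (k + 1) = reachAvoidEvent Xs Xr k := by
  ext ω
  simp only [Set.mem_preimage, reachAvoidEvent, Set.mem_setOf_eq]
  constructor
  · rintro ⟨j, hj, hr, hcond⟩
    cases j with
    | zero => exact absurd hr hx2
    | succ m =>
      exact ⟨m, by omega, hr, fun k' hk' => hcond (k' + 1) (by omega)⟩
  · rintro ⟨j, hj, hr, hcond⟩
    refine ⟨j + 1, by omega, hr, fun k' hk' => ?_⟩
    cases k' with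
    | zero => simpa [prependState] using hx1
    | succ m => exact hcond m (by omega)

lemma reachAvoidValue_props {n : ℕ}
    (κ : Kernel (Fin n → ℝ) (Fin n → ℝ)) [IsMarkovKernel κ]
    {Xs Xr : Set (Fin n → ℝ)} (hXs : MeasurableSet Xs) (hXr : MeasurableSet Xr) :
    ∀ k, Measurable (reachAvoidValue κ Xs Xr k) ∧
      ∀ x, 0 ≤ reachAvoidValue κ Xs Xr k x ∧ reachAvoidValue κ Xs Xr k x ≤ 1 := by
  intro k
  induction k with
  | zero =>
    constructor
    · exact Measurable.ite hXr measurable_const measurable_const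
    · intro x
      by_cases hx : x ∈ Xr <;> simp [reachAvoidValue, hx]
  | succ k ih =>
    obtain ⟨ihm, ihb⟩ := ih
    have hint : ∀ x : Fin n → ℝ, Integrable (reachAvoidValue κ Xs Xr k) (κ x) := by
      intro x
      refine Integrable.mono' (integrable_const (1 : ℝ)) ihm.aestronglyMeasurable ?_
      exact Filter.Eventually.of_forall fun y => by
        rw [Real.norm_eq_abs, abs_of_nonneg (ihb y).1]; exact (ihb y).2
    have hmeasI : Measurable fun x => ∫ y, reachAvoidValue κ Xs Xr k y ∂(κ x) := by
      have heq : ∀ x, ∫ y, reachAvoidValue κ Xs Xr k y ∂(κ x)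
          = (∫⁻ y, ENNReal.ofReal (reachAvoidValue κ Xs Xr k y) ∂(κ x)).toReal := by
        intro x
        rw [integral_eq_lintegral_of_nonneg_ae (Filter.Eventually.of_forall fun y => (ihb y).1)
          ihm.aestronglyMeasurable]
      simp only [heq]
      exact (Measurable.lintegral_kernel (ENNReal.measurable_ofReal.comp ihm)).ennreal_toReal
    constructor
    · exact Measurable.ite hXr measurable_const (Measurable.ite hXs hmeasI measurable_const)
    · intro x
      by_cases hr : x ∈ Xr
      · simp [reachAvoidValue, hr]
      by_cases hs : x ∈ Xs
      · simp only [reachAvoidValue, hr, hs, if_false, if_true]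
        constructor
        · exact integral_nonneg fun y => (ihb y).1
        · calc ∫ y, reachAvoidValue κ Xs Xr k y ∂(κ x)
              ≤ ∫ _, (1 : ℝ) ∂(κ x) :=
                integral_mono (hint x) (integrable_const 1) fun y => (ihb y).2
            _ = 1 := by simp
      · simp [reachAvoidValue, hr, hs]

lemma reachAvoidValue_le_prob {n : ℕ}
    (κ : Kernel (Fin n → ℝ) (Fin n → ℝ)) [IsMarkovKernel κ]
    {Xs Xr : Set (Fin n → ℝ)} (hXs : MeasurableSet Xs) (hXr : MeasurableSet Xr)
    (Pr : (Fin n → ℝ) → Measure (ℕ → (Fin n → ℝ)))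
    (hPrProb : ∀ x, IsProbabilityMeasure (Pr x))
    (hPrRec : ∀ x, Pr x = (κ x).bind (fun y => (Pr y).map (prependState x))) :
    ∀ k x, ENNReal.ofReal (reachAvoidValue κ Xs Xr k x) ≤ Pr x (reachAvoidEvent Xs Xr k) := by
  have hform : ∀ (x : Fin n → ℝ) (S : Set (ℕ → (Fin n → ℝ))), MeasurableSet S →
      Pr x S = ∫⁻ y, Pr y (prependState x ⁻¹' S) ∂(κ x) := by
    intro x S hS
    have haem : AEMeasurable (fun y => (Pr y).map (prependState x)) (κ x) := by
      by_contra h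
      have h0 : Pr x = 0 := by
        rw [hPrRec x, Measure.bind, Measure.map_of_not_aemeasurable h, Measure.join_zero]
      have := (hPrProb x).measure_univ
      rw [h0] at this
      simp at this
    rw [hPrRec x, bind_apply_aemeasurable hS haem]
    congr 1
    ext y
    rw [Measure.map_apply (measurable_prependState x) hS]
  intro k
  induction k with
  | zero =>
    intro x
    by_cases hr : x ∈ Xr
    · have h1 : Pr x (reachAvoidEvent Xs Xr 0) = 1 := by
        rw [hform x _ (measurableSet_reachAvoidEvent hXs hXr 0), prepend_preimage_mem hr 0]
        simp [measure_univ]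
      rw [h1]
      exact ENNReal.ofReal_le_one.mpr
        ((reachAvoidValue_props κ hXs hXr 0).2 x).2
    · simp [reachAvoidValue, hr]
  | succ k ih =>
    intro x
    by_cases hr : x ∈ Xr
    · have h1 : Pr x (reachAvoidEvent Xs Xr (k + 1)) = 1 := by
        rw [hform x _ (measurableSet_reachAvoidEvent hXs hXr (k + 1)),
          prepend_preimage_mem hr (k + 1)]
        simp [measure_univ]
      rw [h1]
      exact ENNReal.ofReal_le_one.mpr
        ((reachAvoidValue_props κ hXs hXr (k + 1)).2 x).2
    by_cases hs : x ∈ Xs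
    · obtain ⟨ihm, ihb⟩ := reachAvoidValue_props κ (Xr := Xr) hXs hXr k
      have hint : Integrable (reachAvoidValue κ Xs Xr k) (κ x) := by
        refine Integrable.mono' (integrable_const (1 : ℝ)) ihm.aestronglyMeasurable ?_
        exact Filter.Eventually.of_forall fun y => by
          rw [Real.norm_eq_abs, abs_of_nonneg (ihb y).1]; exact (ihb y).2
      have hV : reachAvoidValue κ Xs Xr (k + 1) x
          = ∫ y, reachAvoidValue κ Xs Xr k y ∂(κ x) := by
        simp [reachAvoidValue, hr, hs]
      rw [hV, ofReal_integral_eq_lintegral_ofReal hint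
        (Filter.Eventually.of_forall fun y => (ihb y).1)]
      rw [hform x _ (measurableSet_reachAvoidEvent hXs hXr (k + 1)),
        prepend_preimage_step hs hr k]
      exact lintegral_mono fun y => ih y
    · simp [reachAvoidValue, hr, hs]

/-- Under the time-varying certificate conditions (a)–(f) with horizon `H`,
for every initial state `x₀ ∈ X₀` the trajectory measure (the law of the time-homogeneous
Markov chain with transition kernel `κ` started at `x₀`, characterized by the one-step
recursion `Pr x = (κ x).bind (fun y => (Pr y).map (prependState x))`) satisfies
`Pr^{x₀}(RA_H) ≥ γ − (α_H + Σ_{i=1}^H β_i)`. -/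
theorem timeVarying_certificate_reachAvoid_prob_bound
    {n : ℕ} (κ : Kernel (Fin n → ℝ) (Fin n → ℝ)) [IsMarkovKernel κ]
    (Xs Xr X0 : Set (Fin n → ℝ))
    (hXs : MeasurableSet Xs) (hXr : MeasurableSet Xr)
    (hXrXs : Xr ⊆ Xs) (hX0Xs : X0 ⊆ Xs)
    (H : ℕ) (γ : ℝ) (α β : ℕ → ℝ)
    (hγ : 0 ≤ γ) (hα : ∀ i ≤ H, 0 ≤ α i) (hβ : ∀ i, 1 ≤ i → i ≤ H → 0 ≤ β i)
    (R : (Fin n → ℝ) → ℕ → ℝ)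
    (hRmeas : ∀ i ≤ H, Measurable fun x => R x i)
    (hRint : ∀ i ≤ H, ∀ x, Integrable (fun y => R y i) (κ x))
    (ha : ∀ x, ∀ i ≤ H, 0 ≤ R x i)
    (hb : ∀ x ∈ Xr, ∀ i ≤ H, R x i ≤ 1 + α i)
    (hc : ∀ x ∈ Xsᶜ, ∀ i ≤ H, R x i ≤ α i)
    (hd : ∀ x ∈ Xs \ Xr, R x 0 ≤ α 0)
    (he : ∀ x ∈ Xs \ Xr, ∀ i, 1 ≤ i → i ≤ H →
      R x i ≤ (∫ y, R y (i - 1) ∂(κ x)) - α (i - 1) + α i + β i)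
    (hf : ∀ x ∈ X0, γ ≤ R x H)
    (Pr : (Fin n → ℝ) → Measure (ℕ → (Fin n → ℝ)))
    (hPrProb : ∀ x, IsProbabilityMeasure (Pr x))
    (hPrRec : ∀ x, Pr x = (κ x).bind (fun y => (Pr y).map (prependState x))) :
    ∀ x₀ ∈ X0,
      γ - (α H + ∑ i ∈ Finset.Icc 1 H, β i) ≤
        (Pr x₀ (reachAvoidEvent Xs Xr H)).toReal := by
  -- Step A: R x k ≤ V_k x + α k + Σ_{i=1}^k β i for all k ≤ H
  have hA : ∀ k ≤ H, ∀ x,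
      R x k ≤ reachAvoidValue κ Xs Xr k x + (α k + ∑ i ∈ Finset.Icc 1 k, β i) := by
    intro k
    induction k with
    | zero =>
      intro _ x
      simp only [show Finset.Icc 1 0 = (∅ : Finset ℕ) from rfl, Finset.sum_empty, add_zero]
      by_cases hr : x ∈ Xr
      · have := hb x hr 0 (Nat.zero_le _)
        simp [reachAvoidValue, hr]; linarith
      by_cases hs : x ∈ Xs
      · have := hd x ⟨hs, hr⟩
        simp [reachAvoidValue, hr]; linarith
      · have := hc x hs 0 (Nat.zero_le _)
        simp [reachAvoidValue, hr]; linarith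
    | succ k ihk =>
      intro hkH x
      have hsum_nonneg : 0 ≤ ∑ i ∈ Finset.Icc 1 (k + 1), β i :=
        Finset.sum_nonneg fun i hi => by
          rw [Finset.mem_Icc] at hi; exact hβ i hi.1 (by omega)
      by_cases hr : x ∈ Xr
      · have := hb x hr (k + 1) hkH
        simp only [reachAvoidValue, hr, if_true]
        linarith
      by_cases hs : x ∈ Xs
      · obtain ⟨ihm, ihb⟩ := reachAvoidValue_props κ (Xr := Xr) hXs hXr k
        have hintV : Integrable (reachAvoidValue κ Xs Xr k) (κ x) := by
          refine Integrable.mono' (integrable_const (1 : ℝ)) ihm.aestronglyMeasurable ?_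
          exact Filter.Eventually.of_forall fun y => by
            rw [Real.norm_eq_abs, abs_of_nonneg (ihb y).1]; exact (ihb y).2
        set c := α k + ∑ i ∈ Finset.Icc 1 k, β i with hc_def
        have h1 : R x (k + 1) ≤ (∫ y, R y k ∂(κ x)) - α k + α (k + 1) + β (k + 1) := by
          have := he x ⟨hs, hr⟩ (k + 1) (by omega) hkH
          simpa using this
        have h2 : (∫ y, R y k ∂(κ x)) ≤ (∫ y, reachAvoidValue κ Xs Xr k y ∂(κ x)) + c := by
          have hint2 : Integrable (fun y => reachAvoidValue κ Xs Xr k y + c) (κ x) :=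
            hintV.add (integrable_const c)
          calc (∫ y, R y k ∂(κ x))
              ≤ ∫ y, (reachAvoidValue κ Xs Xr k y + c) ∂(κ x) :=
                integral_mono (hRint k (by omega) x) hint2 (ihk (by omega))
            _ = (∫ y, reachAvoidValue κ Xs Xr k y ∂(κ x)) + c := by
                rw [integral_add hintV (integrable_const c)]
                simp
        have hV : reachAvoidValue κ Xs Xr (k + 1) x
            = ∫ y, reachAvoidValue κ Xs Xr k y ∂(κ x) := by
          simp [reachAvoidValue, hr, hs]
        have hsumsucc : ∑ i ∈ Finset.Icc 1 (k + 1), β i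
            = (∑ i ∈ Finset.Icc 1 k, β i) + β (k + 1) :=
          Finset.sum_Icc_succ_top (by omega) β
        rw [hV, hsumsucc]
        simp only [hc_def] at h2
        linarith
      · have := hc x hs (k + 1) hkH
        have hα1 := hα (k + 1) hkH
        simp only [reachAvoidValue, hr, hs, if_false]
        linarith
  intro x₀ hx₀
  have hγR := hf x₀ hx₀
  have hAx := hA H le_rfl x₀
  have hVle := reachAvoidValue_le_prob κ hXs hXr Pr hPrProb hPrRec H x₀
  have hfin : Pr x₀ (reachAvoidEvent Xs Xr H) ≠ ⊤ := measure_ne_top _ _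
  have hVnn := ((reachAvoidValue_props κ (Xr := Xr) hXs hXr H).2 x₀).1
  have h3 : reachAvoidValue κ Xs Xr H x₀ ≤ (Pr x₀ (reachAvoidEvent Xs Xr H)).toReal := by
    have := ENNReal.toReal_mono hfin hVle
    rwa [ENNReal.toReal_ofReal hVnn] at this
  linarith
end

section
/- Under the time-varying certificate conditions (a)–(e) with horizon H, for every 0 ≤ k ≤ H the value function satisfies: V_k(x) ≥ R(x,k) − α_k for all x ∈ X_r ∪ X_u, and V_k(x) ≥ R(x,k) − α_k − Σ_{i=1}^{k} β_i for all x ∈ X_s \ X_r. -/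
open MeasureTheory ProbabilityTheory Finset

attribute [local instance] Classical.propDecidable

lemma reachAvoidValue_bounds {n : ℕ}
    (κ : Kernel (Fin n → ℝ) (Fin n → ℝ)) [IsMarkovKernel κ]
    (Xs Xr : Set (Fin n → ℝ)) :
    ∀ k, ∀ x, 0 ≤ reachAvoidValue κ Xs Xr k x ∧ reachAvoidValue κ Xs Xr k x ≤ 1 := by
  intro k
  induction k with
  | zero => intro x; simp only [reachAvoidValue]; split <;> norm_num
  | succ k ih =>
    intro x
    simp only [reachAvoidValue]
    split
    · norm_num
    · split
      · constructor
        · exact integral_nonneg fun y => (ih y).1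
        · calc (∫ y, reachAvoidValue κ Xs Xr k y ∂(κ x))
              ≤ ∫ _y, (1 : ℝ) ∂(κ x) := by
                refine integral_mono_of_nonneg (Filter.Eventually.of_forall fun y => (ih y).1)
                  (integrable_const 1) (Filter.Eventually.of_forall fun y => (ih y).2)
            _ = 1 := by simp
      · norm_num

lemma reachAvoidValue_measurable {n : ℕ}
    (κ : Kernel (Fin n → ℝ) (Fin n → ℝ)) [IsMarkovKernel κ]
    (Xs Xr : Set (Fin n → ℝ))
    (hXs : MeasurableSet Xs) (hXr : MeasurableSet Xr) :
    ∀ k, Measurable (reachAvoidValue κ Xs Xr k) := by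
  intro k
  induction k with
  | zero =>
    simp only [reachAvoidValue]
    exact Measurable.ite hXr measurable_const measurable_const
  | succ k ih =>
    have hint : Measurable fun x => ∫ y, reachAvoidValue κ Xs Xr k y ∂(κ x) := by
      have : StronglyMeasurable fun p : (Fin n → ℝ) × (Fin n → ℝ) =>
          reachAvoidValue κ Xs Xr k p.2 := (ih.comp measurable_snd).stronglyMeasurable
      exact this.integral_kernel_prod_right'.measurable
    simp only [reachAvoidValue]
    exact Measurable.ite hXr measurable_const (Measurable.ite hXs hint measurable_const)

lemma reachAvoidValue_integrable {n : ℕ}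
    (κ : Kernel (Fin n → ℝ) (Fin n → ℝ)) [IsMarkovKernel κ]
    (Xs Xr : Set (Fin n → ℝ))
    (hXs : MeasurableSet Xs) (hXr : MeasurableSet Xr) (k : ℕ) (x : Fin n → ℝ) :
    Integrable (reachAvoidValue κ Xs Xr k) (κ x) := by
  refine (integrable_const (1 : ℝ)).mono'
    (reachAvoidValue_measurable κ Xs Xr hXs hXr k).aestronglyMeasurable
    (Filter.Eventually.of_forall fun y => ?_)
  rw [Real.norm_eq_abs, abs_of_nonneg (reachAvoidValue_bounds κ Xs Xr k y).1]
  exact (reachAvoidValue_bounds κ Xs Xr k y).2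

/-- Under the time-varying certificate conditions (a)–(e) with horizon `H`,
for every `0 ≤ k ≤ H`: `V_k(x) ≥ R(x,k) − α_k` on `X_r ∪ X_u`, and
`V_k(x) ≥ R(x,k) − α_k − Σ_{i=1}^k β_i` on `X_s \ X_r`. -/
theorem timeVarying_certificate_value_lower_bound
    {n : ℕ} (κ : Kernel (Fin n → ℝ) (Fin n → ℝ)) [IsMarkovKernel κ]
    (Xs Xr : Set (Fin n → ℝ))
    (hXs : MeasurableSet Xs) (hXr : MeasurableSet Xr) (hXrXs : Xr ⊆ Xs)
    (H : ℕ) (α β : ℕ → ℝ)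
    (hα : ∀ i ≤ H, 0 ≤ α i) (hβ : ∀ i, 1 ≤ i → i ≤ H → 0 ≤ β i)
    (R : (Fin n → ℝ) → ℕ → ℝ)
    (hRmeas : ∀ i ≤ H, Measurable fun x => R x i)
    (hRint : ∀ i ≤ H, ∀ x, Integrable (fun y => R y i) (κ x))
    (ha : ∀ x, ∀ i ≤ H, 0 ≤ R x i)
    (hb : ∀ x ∈ Xr, ∀ i ≤ H, R x i ≤ 1 + α i)
    (hc : ∀ x ∈ Xsᶜ, ∀ i ≤ H, R x i ≤ α i)
    (hd : ∀ x ∈ Xs \ Xr, R x 0 ≤ α 0)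
    (he : ∀ x ∈ Xs \ Xr, ∀ i, 1 ≤ i → i ≤ H →
      R x i ≤ (∫ y, R y (i - 1) ∂(κ x)) - α (i - 1) + α i + β i) :
    ∀ k ≤ H,
      (∀ x ∈ Xr ∪ Xsᶜ, R x k - α k ≤ reachAvoidValue κ Xs Xr k x) ∧
      (∀ x ∈ Xs \ Xr,
        R x k - α k - ∑ i ∈ Finset.Icc 1 k, β i ≤ reachAvoidValue κ Xs Xr k x) := by
  intro k
  induction k with
  | zero =>
    intro hk
    refine ⟨fun x hx => ?_, fun x hx => ?_⟩
    · simp only [reachAvoidValue]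
      rcases hx with hx | hx
      · rw [if_pos hx]; linarith [hb x hx 0 hk]
      · rw [if_neg (fun h => hx (hXrXs h))]; linarith [hc x hx 0 hk]
    · simp only [reachAvoidValue]
      rw [if_neg hx.2]
      have : (Finset.Icc 1 0 : Finset ℕ) = ∅ := by decide
      rw [this, Finset.sum_empty]
      linarith [hd x hx]
  | succ k ih =>
    intro hk
    have hk' : k ≤ H := le_of_lt (Nat.lt_of_lt_of_le (Nat.lt_succ_self k) hk)
    obtain ⟨ih1, ih2⟩ := ih hk'
    have hβsum : 0 ≤ ∑ i ∈ Finset.Icc 1 k, β i :=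
      Finset.sum_nonneg fun i hi => by
        rw [Finset.mem_Icc] at hi; exact hβ i hi.1 (le_trans hi.2 hk')
    refine ⟨fun x hx => ?_, fun x hx => ?_⟩
    · simp only [reachAvoidValue]
      rcases hx with hx | hx
      · rw [if_pos hx]; linarith [hb x hx (k + 1) hk]
      · rw [if_neg (fun h => hx (hXrXs h)), if_neg hx]
        linarith [hc x hx (k + 1) hk]
    · -- pointwise bound over all y
      have hpt : ∀ y, R y k - α k - ∑ i ∈ Finset.Icc 1 k, β i
          ≤ reachAvoidValue κ Xs Xr k y := fun y => by
        by_cases hy : y ∈ Xs \ Xr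
        · exact ih2 y hy
        · have hy' : y ∈ Xr ∪ Xsᶜ := by
            by_cases hyr : y ∈ Xr
            · exact Or.inl hyr
            · exact Or.inr fun hys => hy ⟨hys, hyr⟩
          linarith [ih1 y hy']
      have hVint := reachAvoidValue_integrable κ Xs Xr hXs hXr k x
      have hRkint := hRint k hk' x
      have hint_mono :
          (∫ y, R y k ∂(κ x)) - α k - ∑ i ∈ Finset.Icc 1 k, β i
            ≤ ∫ y, reachAvoidValue κ Xs Xr k y ∂(κ x) := by
        have := integral_mono
          (((hRkint.sub (integrable_const (α k))).sub
            (integrable_const (∑ i ∈ Finset.Icc 1 k, β i)))) hVint hpt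
        simp only [Pi.sub_apply] at this
        have heq : ∫ a, (R a k - α k - ∑ i ∈ Finset.Icc 1 k, β i) ∂(κ x)
            = (∫ a, R a k ∂(κ x)) - α k - ∑ i ∈ Finset.Icc 1 k, β i := by
          rw [integral_sub ?_ (integrable_const _),
            integral_sub hRkint (integrable_const _), integral_const, integral_const]
          · simp
          · exact hRkint.sub (integrable_const _)
        rw [heq] at this
        exact this
      simp only [reachAvoidValue]
      rw [if_neg hx.2, if_pos hx.1]
      have heRx := he x hx (k + 1) (Nat.succ_le_succ (Nat.zero_le k)) hk
      simp only [Nat.add_sub_cancel] at heRx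
      have hsum : ∑ i ∈ Finset.Icc 1 (k + 1), β i
          = (∑ i ∈ Finset.Icc 1 k, β i) + β (k + 1) := by
        rw [Finset.sum_Icc_succ_top (Nat.one_le_iff_ne_zero.mpr (Nat.succ_ne_zero k))]
      rw [hsum]
      linarith
end

section
/- Suppose k ∈ ℕ, constants γ ≥ 0, α_i ≥ 0 (0 ≤ i ≤ k+1) with α_{k+1} ≤ α_k, β_i ≥ 0 (1 ≤ i ≤ k), and a function R : ℝⁿ × {0,…,k+1} → ℝ with each R(·,i) Borel measurable and κ(x)-integrable for every x, satisfy: (a) R(x,i) ≥ 0 for all x ∈ ℝⁿ and all 0 ≤ i ≤ k+1; (b) R(x,i) ≤ 1 + α_i for all x ∈ X_r and all 0 ≤ i ≤ k+1; (c) R(x,i) ≤ α_i for all x ∈ X_u and all 0 ≤ i ≤ k+1; (d) R(x,0) ≤ α_0 for all x ∈ X_s \ X_r; (e) R(x,i) ≤ E[R(x′, i−1) | x] − α_{i−1} + α_i + β_i for all x ∈ X_s \ X_r and all 1 ≤ i ≤ k; (f) R(x,k+1) ≤ E[R(x′, k) | x] for all x ∈ X_s \ X_r; (f′) the steady-state condition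 R(x,k+1) ≤ E[R(x′, k+1) | x] for all x ∈ X_s \ X_r; and (g) R(x,k+1) ≥ γ for all x ∈ X₀. Then for every horizon H ≥ k+1 and every x ∈ X₀, V_H(x) ≥ γ − (α_k + Σ_{i=1}^{k} β_i); hence the unbounded-horizon reach-avoid probability from any x ∈ X₀ is at least γ − (α_k + Σ_{i=1}^{k} β_i). -/
open MeasureTheory ProbabilityTheory Finset

attribute [local instance] Classical.propDecidable

section Aux

variable {n : ℕ} (κ : Kernel (Fin n → ℝ) (Fin n → ℝ)) [IsMarkovKernel κ]
    (Xs Xr : Set (Fin n → ℝ))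

lemma reachAvoid_nonneg : ∀ H x, 0 ≤ reachAvoidValue κ Xs Xr H x := by
  intro H
  induction H with
  | zero => intro x; simp only [reachAvoidValue]; split_ifs <;> norm_num
  | succ m ih =>
    intro x
    simp only [reachAvoidValue]
    split_ifs
    · norm_num
    · exact integral_nonneg fun y => ih y
    · exact le_rfl

lemma reachAvoid_meas (hXs : MeasurableSet Xs) (hXr : MeasurableSet Xr) :
    ∀ H, Measurable (reachAvoidValue κ Xs Xr H) := by
  intro H
  induction H with
  | zero =>
    simp only [reachAvoidValue]
    exact Measurable.ite hXr measurable_const measurable_const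
  | succ m ih =>
    have hint : Measurable fun x => ∫ y, reachAvoidValue κ Xs Xr m y ∂(κ x) := by
      have := (ih.stronglyMeasurable.comp_measurable
        (measurable_snd : Measurable fun p : (Fin n → ℝ) × (Fin n → ℝ) => p.2)
        ).integral_kernel_prod_right' (κ := κ)
      exact this.measurable
    simp only [reachAvoidValue]
    exact Measurable.ite hXr measurable_const
      (Measurable.ite hXs hint measurable_const)

lemma reachAvoid_le_one (hXs : MeasurableSet Xs) (hXr : MeasurableSet Xr) :
    ∀ H x, reachAvoidValue κ Xs Xr H x ≤ 1 := by
  intro H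
  induction H with
  | zero => intro x; simp only [reachAvoidValue]; split_ifs <;> norm_num
  | succ m ih =>
    intro x
    simp only [reachAvoidValue]
    split_ifs with h1 h2
    · exact le_rfl
    · have hint : Integrable (reachAvoidValue κ Xs Xr m) (κ x) := by
        refine Integrable.mono' (integrable_const 1)
          ((reachAvoid_meas κ Xs Xr hXs hXr m).aestronglyMeasurable) ?_
        filter_upwards with y
        rw [Real.norm_eq_abs, abs_of_nonneg (reachAvoid_nonneg κ Xs Xr m y)]
        exact ih y
      calc ∫ y, reachAvoidValue κ Xs Xr m y ∂(κ x)
          ≤ ∫ _, (1 : ℝ) ∂(κ x) := integral_mono hint (integrable_const 1) ih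
        _ = 1 := by simp
    · norm_num

lemma reachAvoid_int (hXs : MeasurableSet Xs) (hXr : MeasurableSet Xr)
    (H : ℕ) (x : Fin n → ℝ) :
    Integrable (reachAvoidValue κ Xs Xr H) (κ x) := by
  refine Integrable.mono' (integrable_const 1)
    ((reachAvoid_meas κ Xs Xr hXs hXr H).aestronglyMeasurable) ?_
  filter_upwards with y
  rw [Real.norm_eq_abs, abs_of_nonneg (reachAvoid_nonneg κ Xs Xr H y)]
  exact reachAvoid_le_one κ Xs Xr hXs hXr H y

end Aux

/-- Time-varying, unbounded-horizon reach-avoid certificate: under conditions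
(a)–(g) with the steady-state conditions (f), (f′) and `α_{k+1} ≤ α_k`, for every horizon
`H ≥ k+1` and every `x ∈ X₀`, `V_H(x) ≥ γ − (α_k + Σ_{i=1}^k β_i)`; hence the
unbounded-horizon reach-avoid probability `sup_{H} V_H(x)` from any `x ∈ X₀` is at least
`γ − (α_k + Σ_{i=1}^k β_i)`. -/
theorem timeVarying_certificate_unbounded_horizon
    {n : ℕ} (κ : Kernel (Fin n → ℝ) (Fin n → ℝ)) [IsMarkovKernel κ]
    (Xs Xr X0 : Set (Fin n → ℝ))
    (hXs : MeasurableSet Xs) (hXr : MeasurableSet Xr)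
    (hXrXs : Xr ⊆ Xs) (hX0Xs : X0 ⊆ Xs)
    (k : ℕ) (γ : ℝ) (α β : ℕ → ℝ)
    (hγ : 0 ≤ γ) (hα : ∀ i ≤ k + 1, 0 ≤ α i) (hαk : α (k + 1) ≤ α k)
    (hβ : ∀ i, 1 ≤ i → i ≤ k → 0 ≤ β i)
    (R : (Fin n → ℝ) → ℕ → ℝ)
    (hRmeas : ∀ i ≤ k + 1, Measurable fun x => R x i)
    (hRint : ∀ i ≤ k + 1, ∀ x, Integrable (fun y => R y i) (κ x))
    (ha : ∀ x, ∀ i ≤ k + 1, 0 ≤ R x i)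
    (hb : ∀ x ∈ Xr, ∀ i ≤ k + 1, R x i ≤ 1 + α i)
    (hc : ∀ x ∈ Xsᶜ, ∀ i ≤ k + 1, R x i ≤ α i)
    (hd : ∀ x ∈ Xs \ Xr, R x 0 ≤ α 0)
    (he : ∀ x ∈ Xs \ Xr, ∀ i, 1 ≤ i → i ≤ k →
      R x i ≤ (∫ y, R y (i - 1) ∂(κ x)) - α (i - 1) + α i + β i)
    (hf : ∀ x ∈ Xs \ Xr, R x (k + 1) ≤ ∫ y, R y k ∂(κ x))
    (hf' : ∀ x ∈ Xs \ Xr, R x (k + 1) ≤ ∫ y, R y (k + 1) ∂(κ x))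
    (hg : ∀ x ∈ X0, γ ≤ R x (k + 1)) :
    (∀ x ∈ X0, ∀ H, k + 1 ≤ H →
      γ - (α k + ∑ i ∈ Finset.Icc 1 k, β i) ≤ reachAvoidValue κ Xs Xr H x) ∧
    (∀ x ∈ X0,
      γ - (α k + ∑ i ∈ Finset.Icc 1 k, β i) ≤
        ⨆ H : ℕ, reachAvoidValue κ Xs Xr H x) := by
  set V := reachAvoidValue κ Xs Xr with hV
  -- C i = α i + ∑_{j=1}^i β j
  set C : ℕ → ℝ := fun i => α i + ∑ j ∈ Finset.Icc 1 i, β j with hC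
  have hαleC : ∀ i ≤ k, α i ≤ C i := by
    intro i hi
    refine le_add_of_nonneg_right (Finset.sum_nonneg fun j hj => ?_)
    rw [Finset.mem_Icc] at hj
    exact hβ j hj.1 (le_trans hj.2 hi)
  have hCnonneg : ∀ i ≤ k, 0 ≤ C i := by
    intro i hi
    refine add_nonneg (hα i (by omega)) (Finset.sum_nonneg fun j hj => ?_)
    rw [Finset.mem_Icc] at hj
    exact hβ j hj.1 (le_trans hj.2 hi)
  -- Key: R x i ≤ V i x + C i for i ≤ k
  have key : ∀ i ≤ k, ∀ x, R x i ≤ V i x + C i := by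
    intro i
    induction i with
    | zero =>
      intro _ x
      by_cases h1 : x ∈ Xr
      · have : V 0 x = 1 := by simp [hV, reachAvoidValue, h1]
        rw [this]
        have := hb x h1 0 (by omega)
        linarith [hαleC 0 (Nat.zero_le k)]
      · have : V 0 x = 0 := by simp [hV, reachAvoidValue, h1]
        rw [this]
        by_cases h2 : x ∈ Xs
        · have := hd x ⟨h2, h1⟩
          linarith [hαleC 0 (Nat.zero_le k)]
        · have := hc x h2 0 (by omega)
          linarith [hαleC 0 (Nat.zero_le k)]
    | succ m ih =>
      intro hm x
      have hCm : 0 ≤ C m := hCnonneg m (by omega)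
      have hCm1 : 0 ≤ C (m + 1) := hCnonneg (m + 1) hm
      by_cases h1 : x ∈ Xr
      · have hv : V (m + 1) x = 1 := by simp [hV, reachAvoidValue, h1]
        rw [hv]
        have := hb x h1 (m + 1) (by omega)
        linarith [hαleC (m + 1) hm]
      · by_cases h2 : x ∈ Xs
        · have hv : V (m + 1) x = ∫ y, V m y ∂(κ x) := by
            simp [hV, reachAvoidValue, h1, h2]
          rw [hv]
          have hstep := he x ⟨h2, h1⟩ (m + 1) (by omega) hm
          simp only [Nat.add_sub_cancel] at hstep
          have hmono : (∫ y, R y m ∂(κ x)) ≤ ∫ y, (V m y + C m) ∂(κ x) := by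
            refine integral_mono (hRint m (by omega) x) ?_ (fun y => ih (by omega) y)
            exact (reachAvoid_int κ Xs Xr hXs hXr m x).add (integrable_const _)
          have hsplit : (∫ y, (V m y + C m) ∂(κ x)) = (∫ y, V m y ∂(κ x)) + C m := by
            rw [integral_add (reachAvoid_int κ Xs Xr hXs hXr m x) (integrable_const _)]
            simp
            rfl
          have hCsum : C m - α m + α (m + 1) + β (m + 1) = C (m + 1) := by
            simp only [hC]
            rw [Finset.sum_Icc_succ_top (by omega : 1 ≤ m + 1)]
            ring
          calc R x (m + 1) ≤ (∫ y, R y m ∂(κ x)) - α m + α (m + 1) + β (m + 1) := hstep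
            _ ≤ ((∫ y, V m y ∂(κ x)) + C m) - α m + α (m + 1) + β (m + 1) := by
                rw [← hsplit]; linarith
            _ = (∫ y, V m y ∂(κ x)) + C (m + 1) := by rw [← hCsum]; ring
        · have hv : V (m + 1) x = 0 := by simp [hV, reachAvoidValue, h1, h2]
          rw [hv]
          have := hc x h2 (m + 1) (by omega)
          linarith [hαleC (m + 1) hm]
  -- Key2: for H ≥ k+1, R x (k+1) ≤ V H x + C k
  have key2 : ∀ H, k + 1 ≤ H → ∀ x, R x (k + 1) ≤ V H x + C k := by
    intro H
    induction H with
    | zero => omega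
    | succ m ih =>
      intro hm x
      have hCk : 0 ≤ C k := hCnonneg k le_rfl
      by_cases h1 : x ∈ Xr
      · have hv : V (m + 1) x = 1 := by simp [hV, reachAvoidValue, h1]
        rw [hv]
        have := hb x h1 (k + 1) le_rfl
        linarith [hαleC k le_rfl, hαk]
      · by_cases h2 : x ∈ Xs
        · have hv : V (m + 1) x = ∫ y, V m y ∂(κ x) := by
            simp [hV, reachAvoidValue, h1, h2]
          rw [hv]
          by_cases hmk : m = k
          · subst hmk
            have hstep := hf x ⟨h2, h1⟩
            have hmono : (∫ y, R y m ∂(κ x)) ≤ ∫ y, (V m y + C m) ∂(κ x) := by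
              refine integral_mono (hRint m (by omega) x) ?_ (fun y => key m le_rfl y)
              exact (reachAvoid_int κ Xs Xr hXs hXr m x).add (integrable_const _)
            have hsplit : (∫ y, (V m y + C m) ∂(κ x)) = (∫ y, V m y ∂(κ x)) + C m := by
              rw [integral_add (reachAvoid_int κ Xs Xr hXs hXr m x) (integrable_const _)]
              simp
              rfl
            linarith
          · have hmge : k + 1 ≤ m := by omega
            have hstep := hf' x ⟨h2, h1⟩
            have hmono : (∫ y, R y (k + 1) ∂(κ x)) ≤ ∫ y, (V m y + C k) ∂(κ x) := by
              refine integral_mono (hRint (k + 1) le_rfl x) ?_ (fun y => ih hmge y)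
              exact (reachAvoid_int κ Xs Xr hXs hXr m x).add (integrable_const _)
            have hsplit : (∫ y, (V m y + C k) ∂(κ x)) = (∫ y, V m y ∂(κ x)) + C k := by
              rw [integral_add (reachAvoid_int κ Xs Xr hXs hXr m x) (integrable_const _)]
              simp
              rfl
            linarith
        · have hv : V (m + 1) x = 0 := by simp [hV, reachAvoidValue, h1, h2]
          rw [hv]
          have := hc x h2 (k + 1) le_rfl
          linarith [hαleC k le_rfl, hαk]
  have main : ∀ x ∈ X0, ∀ H, k + 1 ≤ H → γ - C k ≤ V H x := by
    intro x hx H hH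
    have := key2 H hH x
    have := hg x hx
    linarith
  refine ⟨main, fun x hx => ?_⟩
  have hbdd : BddAbove (Set.range fun H => V H x) := by
    refine ⟨1, fun v hv => ?_⟩
    obtain ⟨H, rfl⟩ := hv
    exact reachAvoid_le_one κ Xs Xr hXs hXr H x
  calc γ - C k ≤ V (k + 1) x := main x hx (k + 1) le_rfl
    _ ≤ ⨆ H : ℕ, V H x := le_ciSup hbdd (k + 1)
end

section
/- (Putinar's Positivstellensatz.) Let h_1,…,h_l be real polynomials in n variables, and let Q(h) := {σ_0 + Σ_{i=1}^{l} σ_i h_i : σ_0, σ_1, …, σ_l SOS} be the associated quadratic module. Assume Q(h) is Archimedean, i.e., there exists N ∈ ℝ such that N − Σ_{j=1}^{n} x_j² ∈ Q(h). If a real polynomial p satisfies p(x) > 0 for every x ∈ K := {x ∈ ℝⁿ : h_i(x) ≥ 0 for all i ∈ {1,…,l}}, then p ∈ Q(h). -/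
open Finset

/-- A real polynomial is a sum of squares (SOS) if it is a finite sum of squares
of real polynomials. -/
def IsSOS {n : ℕ} (p : MvPolynomial (Fin n) ℝ) : Prop :=
  ∃ (r : ℕ) (q : Fin r → MvPolynomial (Fin n) ℝ), p = ∑ j, (q j) ^ 2

/-- Membership in the quadratic module generated by `h_1, …, h_l`:
`p = σ₀ + Σ_i σ_i h_i` with all `σ`'s SOS. -/
def memQuadraticModule {n l : ℕ} (h : Fin l → MvPolynomial (Fin n) ℝ)
    (p : MvPolynomial (Fin n) ℝ) : Prop :=
  ∃ (σ0 : MvPolynomial (Fin n) ℝ) (σ : Fin l → MvPolynomial (Fin n) ℝ),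
    IsSOS σ0 ∧ (∀ i, IsSOS (σ i)) ∧ p = σ0 + ∑ i, σ i * h i

namespace PutinarAux
open MvPolynomial

variable {n : ℕ}

abbrev A (n : ℕ) := MvPolynomial (Fin n) ℝ

lemma isSOS_iff_list {p : A n} :
    IsSOS p ↔ ∃ L : List (A n), p = (L.map (fun q => q ^ 2)).sum := by
  constructor
  · rintro ⟨r, q, rfl⟩
    refine ⟨List.ofFn q, ?_⟩
    rw [List.map_ofFn, List.sum_ofFn]
    rfl
  · rintro ⟨L, rfl⟩
    refine ⟨L.length, fun i => L.get i, ?_⟩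
    conv_lhs => rw [← List.ofFn_get L]
    rw [List.map_ofFn, List.sum_ofFn]
    rfl

lemma isSOS_zero : IsSOS (0 : A n) := ⟨0, fun i => 0, by simp⟩

lemma isSOS_sq (f : A n) : IsSOS (f ^ 2) := ⟨1, fun _ => f, by simp⟩

lemma isSOS_one : IsSOS (1 : A n) := by simpa using isSOS_sq (1 : A n)

lemma isSOS_add {p q : A n} (hp : IsSOS p) (hq : IsSOS q) : IsSOS (p + q) := by
  rw [isSOS_iff_list] at *
  obtain ⟨L1, rfl⟩ := hp
  obtain ⟨L2, rfl⟩ := hq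
  exact ⟨L1 ++ L2, by rw [List.map_append, List.sum_append]⟩

lemma isSOS_sq_mul {p : A n} (f : A n) (hp : IsSOS p) : IsSOS (f ^ 2 * p) := by
  rw [isSOS_iff_list] at *
  obtain ⟨L, rfl⟩ := hp
  refine ⟨L.map (fun q => f * q), ?_⟩
  rw [List.map_map]
  induction L with
  | nil => simp
  | cons a t ih =>
      simp only [List.map_cons, List.sum_cons, mul_add, ih, Function.comp, mul_pow]

/-- Quadratic module structure on a set of polynomials. -/
structure IsQM (T : Set (A n)) : Prop where
  add_mem : ∀ {a b : A n}, a ∈ T → b ∈ T → a + b ∈ T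
  sq_mul_mem : ∀ (f : A n) {a : A n}, a ∈ T → f ^ 2 * a ∈ T
  sq_mem : ∀ f : A n, f ^ 2 ∈ T

namespace IsQM

variable {T : Set (A n)}

lemma zero_mem (hT : IsQM T) : (0 : A n) ∈ T := by simpa using hT.sq_mem 0

lemma one_mem (hT : IsQM T) : (1 : A n) ∈ T := by simpa using hT.sq_mem 1

lemma C_mem (hT : IsQM T) {c : ℝ} (hc : 0 ≤ c) : (C c : A n) ∈ T := by
  have : (C c : A n) = (C (Real.sqrt c)) ^ 2 := by
    rw [← map_pow, Real.sq_sqrt hc]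
  rw [this]; exact hT.sq_mem _

lemma C_mul_mem (hT : IsQM T) {c : ℝ} (hc : 0 ≤ c) {a : A n} (ha : a ∈ T) : C c * a ∈ T := by
  have : (C c : A n) = (C (Real.sqrt c)) ^ 2 := by
    rw [← map_pow, Real.sq_sqrt hc]
  rw [this]; exact hT.sq_mul_mem _ ha

lemma sos_mul_mem (hT : IsQM T) {s : A n} (hs : IsSOS s) {a : A n} (ha : a ∈ T) : s * a ∈ T := by
  rw [isSOS_iff_list] at hs
  obtain ⟨L, rfl⟩ := hs
  induction L with
  | nil => simpa using hT.zero_mem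
  | cons q t ih =>
      simp only [List.map_cons, List.sum_cons, add_mul]
      exact hT.add_mem (hT.sq_mul_mem q ha) ih

lemma sos_mem (hT : IsQM T) {s : A n} (hs : IsSOS s) : s ∈ T := by
  have := hT.sos_mul_mem hs hT.one_mem
  simpa using this

/-- Key product fact: if `a, b ∈ T` and `a + b` is a positive constant, then `a*b ∈ T`. -/
lemma prodM (hT : IsQM T) {a b : A n} {c : ℝ} (ha : a ∈ T) (hb : b ∈ T)
    (hab : a + b = C c) (hc : 0 < c) : a * b ∈ T := by
  have key : a * b = C c⁻¹ * (a ^ 2 * b + b ^ 2 * a) := by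
    have h1 : a ^ 2 * b + b ^ 2 * a = (a * b) * (a + b) := by ring
    rw [h1, hab, ← mul_assoc, mul_comm (C c⁻¹), mul_assoc, ← map_mul,
      inv_mul_cancel₀ (ne_of_gt hc), map_one, mul_one]
  rw [key]
  exact hT.C_mul_mem (inv_nonneg.mpr hc.le)
    (hT.add_mem (hT.sq_mul_mem a hb) (hT.sq_mul_mem b ha))

end IsQM


section Module
variable {l : ℕ} (h : Fin l → A n)

def Mset : Set (A n) := {x | memQuadraticModule h x}

lemma isQM_Mset : IsQM (Mset h) := by
  constructor
  · rintro a b ⟨s0, s, hs0, hs, rfl⟩ ⟨t0, t, ht0, ht, rfl⟩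
    refine ⟨s0 + t0, fun i => s i + t i, isSOS_add hs0 ht0,
      fun i => isSOS_add (hs i) (ht i), ?_⟩
    simp only [add_mul]
    rw [Finset.sum_add_distrib]
    ring
  · rintro f a ⟨s0, s, hs0, hs, rfl⟩
    refine ⟨f ^ 2 * s0, fun i => f ^ 2 * s i, isSOS_sq_mul f hs0,
      fun i => isSOS_sq_mul f (hs i), ?_⟩
    simp only [mul_add, Finset.mul_sum, mul_assoc]
  · intro f
    exact ⟨f ^ 2, fun _ => 0, isSOS_sq f, fun _ => isSOS_zero, by simp⟩

lemma h_mem_Mset (i : Fin l) : h i ∈ Mset h := by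
  classical
  refine ⟨0, fun j => if j = i then 1 else 0, isSOS_zero, fun j => ?_, ?_⟩
  · by_cases hj : j = i <;> simp [hj, isSOS_one, isSOS_zero]
  · rw [zero_add]
    rw [Finset.sum_eq_single i]
    · simp
    · intro j _ hj; simp [hj]
    · intro hi; exact absurd (Finset.mem_univ i) hi

end Module

section Bdd

variable {l : ℕ} {h : Fin l → A n}

/-- Boundedness with respect to the quadratic module. -/
def Bdd (h : Fin l → A n) (f : A n) : Prop :=
  ∃ c : ℝ, 0 < c ∧ (C c - f) ∈ Mset h ∧ (C c + f) ∈ Mset h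

lemma bdd_of_mem {f : A n} {c : ℝ} (h1 : (C c - f) ∈ Mset h) (h2 : (C c + f) ∈ Mset h) :
    Bdd h f := by
  have hQM := isQM_Mset h
  refine ⟨max c 1, lt_of_lt_of_le one_pos (le_max_right _ _), ?_, ?_⟩
  · have : (C (max c 1) - f : A n) = C (max c 1 - c) + (C c - f) := by
      rw [map_sub]; ring
    rw [this]
    exact hQM.add_mem (hQM.C_mem (by simp [le_max_left])) h1
  · have : (C (max c 1) + f : A n) = C (max c 1 - c) + (C c + f) := by
      rw [map_sub]; ring
    rw [this]
    exact hQM.add_mem (hQM.C_mem (by simp [le_max_left])) h2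

lemma bdd_C (r : ℝ) : Bdd h (C r : A n) := by
  have hQM := isQM_Mset h
  refine bdd_of_mem (c := |r|) ?_ ?_
  · rw [← map_sub]; exact hQM.C_mem (by simp [abs_nonneg, neg_abs_le, le_abs_self])
  · rw [← map_add]; exact hQM.C_mem (by linarith [neg_abs_le r])

lemma bdd_add {f g : A n} (hf : Bdd h f) (hg : Bdd h g) : Bdd h (f + g) := by
  have hQM := isQM_Mset h
  obtain ⟨c1, hc1, hf1, hf2⟩ := hf
  obtain ⟨c2, hc2, hg1, hg2⟩ := hg
  refine ⟨c1 + c2, by linarith, ?_, ?_⟩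
  · have : (C (c1 + c2) - (f + g) : A n) = (C c1 - f) + (C c2 - g) := by
      rw [map_add]; ring
    rw [this]; exact hQM.add_mem hf1 hg1
  · have : (C (c1 + c2) + (f + g) : A n) = (C c1 + f) + (C c2 + g) := by
      rw [map_add]; ring
    rw [this]; exact hQM.add_mem hf2 hg2

lemma bdd_sq {f : A n} {c : ℝ} (hc : 0 < c) (h1 : (C c - f) ∈ Mset h)
    (h2 : (C c + f) ∈ Mset h) : (C (c ^ 2) - f ^ 2 : A n) ∈ Mset h := by
  have hQM := isQM_Mset h
  have key : (C (c ^ 2) - f ^ 2 : A n)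
      = C (2 * c)⁻¹ * ((C c - f) ^ 2 * (C c + f) + (C c + f) ^ 2 * (C c - f)) := by
    have h2c : (C ((2 * c)⁻¹) : A n) * C (2 * c) = 1 := by
      rw [← map_mul, inv_mul_cancel₀ (by positivity), map_one]
    have expand : ((C c - f) ^ 2 * (C c + f) + (C c + f) ^ 2 * (C c - f) : A n)
        = C (2 * c) * (C (c ^ 2) - f ^ 2) := by
      rw [map_mul, map_pow]
      simp only [map_ofNat]
      ring
    rw [expand, ← mul_assoc, h2c, one_mul]
  rw [key]
  exact hQM.C_mul_mem (by positivity)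
    (hQM.add_mem (hQM.sq_mul_mem _ h2) (hQM.sq_mul_mem _ h1))

lemma bdd_mul {f g : A n} (hf : Bdd h f) (hg : Bdd h g) : Bdd h (f * g) := by
  have hQM := isQM_Mset h
  obtain ⟨c1, hc1, hf1, hf2⟩ := hf
  obtain ⟨c2, hc2, hg1, hg2⟩ := hg
  set s := c1 + c2 with hs
  have hspos : 0 < s := by linarith
  have hsub1 : (C s - (f - g) : A n) ∈ Mset h := by
    have : (C s - (f - g) : A n) = (C c1 - f) + (C c2 + g) := by rw [map_add]; ring
    rw [this]; exact hQM.add_mem hf1 hg2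
  have hsub2 : (C s + (f - g) : A n) ∈ Mset h := by
    have : (C s + (f - g) : A n) = (C c1 + f) + (C c2 - g) := by rw [map_add]; ring
    rw [this]; exact hQM.add_mem hf2 hg1
  have hadd1 : (C s - (f + g) : A n) ∈ Mset h := by
    have : (C s - (f + g) : A n) = (C c1 - f) + (C c2 - g) := by rw [map_add]; ring
    rw [this]; exact hQM.add_mem hf1 hg1
  have hadd2 : (C s + (f + g) : A n) ∈ Mset h := by
    have : (C s + (f + g) : A n) = (C c1 + f) + (C c2 + g) := by rw [map_add]; ring
    rw [this]; exact hQM.add_mem hf2 hg2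
  have hX1 : (C (s ^ 2) - (f - g) ^ 2 : A n) ∈ Mset h := bdd_sq hspos hsub1 hsub2
  have hX2 : (C (s ^ 2) - (f + g) ^ 2 : A n) ∈ Mset h := bdd_sq hspos hadd1 hadd2
  refine ⟨s ^ 2, by positivity, ?_, ?_⟩
  · have : (C (s ^ 2) - f * g : A n)
        = C (4 : ℝ)⁻¹ * (C (3 * s ^ 2) + (f - g) ^ 2 + (C (s ^ 2) - (f + g) ^ 2)) := by
      have h4 : (C ((4 : ℝ)⁻¹) : A n) * C (4 : ℝ) = 1 := by
        rw [← map_mul, inv_mul_cancel₀ (by norm_num), map_one]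
      have expand : (C (3 * s ^ 2) + (f - g) ^ 2 + (C (s ^ 2) - (f + g) ^ 2) : A n)
          = C (4 : ℝ) * (C (s ^ 2) - f * g) := by
        rw [map_mul]
        simp only [map_ofNat]
        ring
      rw [expand, ← mul_assoc, h4, one_mul]
    rw [this]
    exact hQM.C_mul_mem (by norm_num)
      (hQM.add_mem (hQM.add_mem (hQM.C_mem (by positivity)) (hQM.sq_mem _)) hX2)
  · have : (C (s ^ 2) + f * g : A n)
        = C (4 : ℝ)⁻¹ * (C (3 * s ^ 2) + (f + g) ^ 2 + (C (s ^ 2) - (f - g) ^ 2)) := by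
      have h4 : (C ((4 : ℝ)⁻¹) : A n) * C (4 : ℝ) = 1 := by
        rw [← map_mul, inv_mul_cancel₀ (by norm_num), map_one]
      have expand : (C (3 * s ^ 2) + (f + g) ^ 2 + (C (s ^ 2) - (f - g) ^ 2) : A n)
          = C (4 : ℝ) * (C (s ^ 2) + f * g) := by
        rw [map_mul]
        simp only [map_ofNat]
        ring
      rw [expand, ← mul_assoc, h4, one_mul]
    rw [this]
    exact hQM.C_mul_mem (by norm_num)
      (hQM.add_mem (hQM.add_mem (hQM.C_mem (by positivity)) (hQM.sq_mem _)) hX1)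

lemma bdd_X (harch : ∃ N : ℝ, (C N - ∑ j, (X j : A n) ^ 2) ∈ Mset h) (i : Fin n) :
    Bdd h (X i : A n) := by
  classical
  have hQM := isQM_Mset h
  obtain ⟨N, hN⟩ := harch
  have hsum : (∑ j ∈ Finset.univ.erase i, (X j : A n) ^ 2) ∈ Mset h := by
    apply Finset.sum_induction _ (· ∈ Mset h) (fun a b ha hb => hQM.add_mem ha hb) hQM.zero_mem
    intro j _
    exact hQM.sq_mem _
  have key : ∀ (t : ℝ), (X i - C t : A n) ^ 2 ∈ Mset h := fun t => hQM.sq_mem _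
  have hmem : ∀ (t : ℝ), (C (N + t ^ 2) - C (2 * t) * X i : A n) ∈ Mset h := by
    intro t
    have identity : (C (N + t ^ 2) - C (2 * t) * X i : A n)
        = (C N - ∑ j, (X j : A n) ^ 2) + (∑ j ∈ Finset.univ.erase i, (X j : A n) ^ 2)
          + (X i - C t) ^ 2 := by
      have hsplit : (∑ j, (X j : A n) ^ 2)
          = (X i : A n) ^ 2 + ∑ j ∈ Finset.univ.erase i, (X j : A n) ^ 2 := by
        rw [← Finset.add_sum_erase _ _ (Finset.mem_univ i)]
      rw [hsplit, map_add, map_mul]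
      simp only [map_ofNat, map_pow]
      ring
    rw [identity]
    exact hQM.add_mem (hQM.add_mem hN hsum) (key t)
  have m1 := hmem (1 / 2)
  have m2 := hmem (-(1 / 2))
  refine bdd_of_mem (c := N + (1 / 2 : ℝ) ^ 2) ?_ ?_
  · have : (C (N + (1 / 2 : ℝ) ^ 2) - X i : A n)
        = C (N + (1 / 2 : ℝ) ^ 2) - C (2 * (1 / 2 : ℝ)) * X i := by norm_num
    rw [this]; exact m1
  · have : (C (N + (1 / 2 : ℝ) ^ 2) + X i : A n)
        = C (N + (-(1 / 2) : ℝ) ^ 2) - C (2 * (-(1 / 2) : ℝ)) * X i := by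
      norm_num
    rw [this]; exact m2

lemma bdd_all (harch : ∃ N : ℝ, (C N - ∑ j, (X j : A n) ^ 2) ∈ Mset h) (f : A n) :
    Bdd h f := by
  induction f using MvPolynomial.induction_on with
  | C a => exact bdd_C a
  | add p q hp hq => exact bdd_add hp hq
  | mul_X p i hp => exact bdd_mul hp (bdd_X harch i)

end Bdd

section Extraction

noncomputable def wseq : ℕ → ℝ
  | 0 => 1
  | (j+1) => 4 * (wseq j) ^ 3

noncomputable def Nseq (δ : ℝ) : ℕ → ℝ
  | 0 => 1 - δ
  | (j+1) => (Nseq δ j) ^ 2 * (3 * wseq j + Nseq δ j)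

noncomputable def Gseq (s : A n) : ℕ → A n
  | 0 => 1 - s
  | (j+1) => (Gseq s j) ^ 2 * (C (3 * wseq j) + Gseq s j)

lemma wseq_pos : ∀ j, 0 < wseq j
  | 0 => one_pos
  | (j+1) => by
      have := wseq_pos j
      simp only [wseq]
      positivity

variable {δ : ℝ}

lemma Nseq_pos (hδ : δ < 1) : ∀ j, 0 < Nseq δ j
  | 0 => by simp only [Nseq]; linarith
  | (j+1) => by
      have h1 := Nseq_pos hδ j
      have h2 := wseq_pos j
      simp only [Nseq]
      positivity

lemma Nseq_le_wseq (hδ0 : 0 < δ) (hδ : δ < 1) : ∀ j, Nseq δ j ≤ wseq j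
  | 0 => by simp only [Nseq, wseq]; linarith
  | (j+1) => by
      have h1 := Nseq_le_wseq hδ0 hδ j
      have h2 := (Nseq_pos hδ j).le
      have h3 := wseq_pos j
      simp only [Nseq, wseq]
      nlinarith [mul_nonneg (sub_nonneg.2 h1)
        (show (0:ℝ) ≤ 4 * wseq j ^ 2 + 4 * wseq j * Nseq δ j + Nseq δ j ^ 2 by positivity)]

lemma ratio_rec (hδ : δ < 1) (j : ℕ) :
    Nseq δ (j+1) / wseq (j+1) = (Nseq δ j / wseq j) ^ 2 * (3 + Nseq δ j / wseq j) / 4 := by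
  have h3 := wseq_pos j
  have h4 : wseq j ≠ 0 := h3.ne'
  simp only [Nseq, wseq]
  field_simp
  try exact Or.inl trivial

/-- contraction factor -/
lemma ratio_le_pow (hδ0 : 0 < δ) (hδ : δ < 1) :
    ∀ j, Nseq δ j / wseq j ≤ ((1 - δ) * (4 - δ) / 4) ^ j ∧ Nseq δ j / wseq j ≤ 1 - δ := by
  intro j
  induction j with
  | zero => refine ⟨?_, ?_⟩ <;> simp [Nseq, wseq] <;> linarith
  | succ j ih =>
      obtain ⟨ih1, ih2⟩ := ih
      have hpos : 0 < Nseq δ j / wseq j := div_pos (Nseq_pos hδ j) (wseq_pos j)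
      set ρ := Nseq δ j / wseq j with hρ
      have hrec := ratio_rec hδ j
      rw [← hρ] at hrec
      have hθ : (0:ℝ) ≤ (1 - δ) * (4 - δ) / 4 := by nlinarith
      have hθ1 : (1 - δ) * (4 - δ) / 4 ≤ 1 := by nlinarith
      have hstep : ρ ^ 2 * (3 + ρ) / 4 ≤ ((1 - δ) * (4 - δ) / 4) * ρ := by
        nlinarith [mul_le_mul ih2 (show 3 + ρ ≤ 4 - δ by linarith) (by linarith) (by linarith)]
      constructor
      · rw [hrec]
        calc ρ ^ 2 * (3 + ρ) / 4 ≤ ((1 - δ) * (4 - δ) / 4) * ρ := hstep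
          _ ≤ ((1 - δ) * (4 - δ) / 4) * ((1 - δ) * (4 - δ) / 4) ^ j := by
              apply mul_le_mul_of_nonneg_left ih1 hθ
          _ = ((1 - δ) * (4 - δ) / 4) ^ (j+1) := by ring
      · rw [hrec]
        calc ρ ^ 2 * (3 + ρ) / 4 ≤ ((1 - δ) * (4 - δ) / 4) * ρ := hstep
          _ ≤ 1 * (1 - δ) := by
              apply mul_le_mul hθ1 ih2 hpos.le zero_le_one
          _ = 1 - δ := one_mul _

variable {T : Set (A n)} {s b : A n} {lam : ℝ}

lemma Gseq_mem (hT : IsQM T) (hv : (1 : A n) - s ∈ T) : ∀ j, Gseq s j ∈ T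
  | 0 => by simpa [Gseq] using hv
  | (j+1) => by
      have h1 := Gseq_mem hT hv j
      have h2 := wseq_pos j
      exact hT.sq_mul_mem _ (hT.add_mem (hT.C_mem (by positivity)) h1)

lemma Gseq_cert (hT : IsQM T) (hδ0 : 0 < δ) (hδ : δ < 1)
    (hv : (1 : A n) - s ∈ T) (hu : s - C δ ∈ T) :
    ∀ j, C (Nseq δ j) - Gseq s j ∈ T
  | 0 => by
      have : (C (Nseq δ 0) - Gseq s 0 : A n) = s - C δ := by
        simp only [Nseq, Gseq, map_sub, map_one]
        ring
      rw [this]; exact hu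
  | (j+1) => by
      have ih := Gseq_cert hT hδ0 hδ hv hu j
      have hG := Gseq_mem hT hv j
      have hNpos := Nseq_pos hδ j
      have hw := wseq_pos j
      have hplus : (C (Nseq δ j) + Gseq s j : A n) ∈ T :=
        hT.add_mem (hT.C_mem hNpos.le) hG
      have hprod : (C (Nseq δ j) - Gseq s j) * (C (Nseq δ j) + Gseq s j) ∈ T := by
        refine hT.prodM ih hplus (c := Nseq δ j + Nseq δ j) ?_ (by linarith)
        rw [map_add]; ring
      have hsq : ((C 2 * Gseq s j + C (Nseq δ j)) ^ 2 + C (3 * (Nseq δ j) ^ 2))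
          * (C (Nseq δ j) - Gseq s j) ∈ T := by
        have e : ((C 2 * Gseq s j + C (Nseq δ j)) ^ 2 + C (3 * (Nseq δ j) ^ 2))
            * (C (Nseq δ j) - Gseq s j)
            = (C 2 * Gseq s j + C (Nseq δ j)) ^ 2 * (C (Nseq δ j) - Gseq s j)
              + C (3 * (Nseq δ j) ^ 2) * (C (Nseq δ j) - Gseq s j) := by ring
        rw [e]
        exact hT.add_mem (hT.sq_mul_mem _ ih) (hT.C_mul_mem (by positivity) ih)
      have hsum : C (12 * wseq j) * ((C (Nseq δ j) - Gseq s j) * (C (Nseq δ j) + Gseq s j))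
          + ((C 2 * Gseq s j + C (Nseq δ j)) ^ 2 + C (3 * (Nseq δ j) ^ 2))
            * (C (Nseq δ j) - Gseq s j) ∈ T :=
        hT.add_mem (hT.C_mul_mem (by positivity) hprod) hsq
      have hC4 : ((4 : A n)) = C (4:ℝ) := (map_ofNat C 4).symm
      have h41 : (C ((4:ℝ)⁻¹) : A n) * 4 = 1 := by
        rw [hC4, ← map_mul, inv_mul_cancel₀ (by norm_num), map_one]
      have identity : (C (Nseq δ (j+1)) - Gseq s (j+1) : A n)
          = C ((4:ℝ)⁻¹) * (C (12 * wseq j)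
              * ((C (Nseq δ j) - Gseq s j) * (C (Nseq δ j) + Gseq s j))
            + ((C 2 * Gseq s j + C (Nseq δ j)) ^ 2 + C (3 * (Nseq δ j) ^ 2))
              * (C (Nseq δ j) - Gseq s j)) := by
        simp only [Nseq, Gseq, map_mul, map_add, map_pow, map_ofNat]
        linear_combination (-(C (Nseq δ j) ^ 2 * ((3:A n) * C (wseq j) + C (Nseq δ j))
          - Gseq s j ^ 2 * ((3:A n) * C (wseq j) + Gseq s j))) * h41
      rw [identity]
      exact hT.C_mul_mem (by norm_num) hsum

lemma Gseq_b_mem (hT : IsQM T) (hv : (1 : A n) - s ∈ T) (hsb : s * b ∈ T) :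
    ∀ j, (C (wseq j) - Gseq s j) * b ∈ T
  | 0 => by
      have : ((C (wseq 0) - Gseq s 0) * b : A n) = s * b := by
        simp only [wseq, Gseq, map_one]; ring
      rw [this]; exact hsb
  | (j+1) => by
      have ih := Gseq_b_mem hT hv hsb j
      have identity : ((C (wseq (j+1)) - Gseq s (j+1)) * b : A n)
          = (C (2 * wseq j) + Gseq s j) ^ 2 * ((C (wseq j) - Gseq s j) * b) := by
        simp only [wseq, Gseq, map_mul, map_add, map_pow, map_ofNat]
        ring
      rw [identity]
      exact hT.sq_mul_mem _ ih

lemma mem_weaken (hT : IsQM T) {a : A n} {c c' : ℝ} (hm : a + C c ∈ T) (hcc : c ≤ c') :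
    a + C c' ∈ T := by
  have : (a + C c' : A n) = (a + C c) + C (c' - c) := by rw [map_sub]; ring
  rw [this]
  exact hT.add_mem hm (hT.C_mem (by linarith))

lemma Gseq_main (hT : IsQM T) (hs : IsSOS s) (hδ0 : 0 < δ) (hδ : δ < 1) (hlam : 0 < lam)
    (hv : (1 : A n) - s ∈ T) (hu : s - C δ ∈ T)
    (hb1 : C lam - b ∈ T) (hb2 : C lam + b ∈ T) (hsb : s * b ∈ T) :
    ∀ j, Gseq s (j+1) * b + C (5 * lam * wseq j * (Nseq δ j) ^ 2) ∈ T := by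
  have hnu : (C lam - s * b : A n) ∈ T := by
    have e : (C lam - s * b : A n) = C lam * ((1:A n) - s) + s * (C lam - b) := by ring
    rw [e]
    exact hT.add_mem (hT.C_mul_mem hlam.le hv) (hT.sos_mul_mem hs hb1)
  have hplusC : ∀ j, (C (Nseq δ j) + Gseq s j : A n) ∈ T := fun j =>
    hT.add_mem (hT.C_mem (Nseq_pos hδ j).le) (Gseq_mem hT hv j)
  have hprodC : ∀ j, (C (Nseq δ j) - Gseq s j) * (C (Nseq δ j) + Gseq s j) ∈ T := by
    intro j
    refine hT.prodM (Gseq_cert hT hδ0 hδ hv hu j) (hplusC j)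
      (c := Nseq δ j + Nseq δ j) ?_ (by linarith [Nseq_pos hδ j])
    rw [map_add]; ring
  intro j
  induction j with
  | zero =>
      have T1 : (C (4:ℝ) * (Gseq s 0 ^ 2 * (C lam + b)) : A n) ∈ T :=
        hT.C_mul_mem (by norm_num) (hT.sq_mul_mem _ hb2)
      have T2 : (C (4 * lam) * ((C (Nseq δ 0) - Gseq s 0) * (C (Nseq δ 0) + Gseq s 0)) : A n)
          ∈ T := hT.C_mul_mem (by positivity) (hprodC 0)
      have T3 : (Gseq s 0 ^ 2 * (C lam - s * b) : A n) ∈ T := hT.sq_mul_mem _ hnu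
      have T4 : (C lam * ((C (Nseq δ 0) - Gseq s 0) * (C (Nseq δ 0) + Gseq s 0)) : A n) ∈ T :=
        hT.C_mul_mem hlam.le (hprodC 0)
      have identity : (Gseq s 1 * b + C (5 * lam * wseq 0 * (Nseq δ 0) ^ 2) : A n)
          = C (4:ℝ) * (Gseq s 0 ^ 2 * (C lam + b))
            + C (4 * lam) * ((C (Nseq δ 0) - Gseq s 0) * (C (Nseq δ 0) + Gseq s 0))
            + Gseq s 0 ^ 2 * (C lam - s * b)
            + C lam * ((C (Nseq δ 0) - Gseq s 0) * (C (Nseq δ 0) + Gseq s 0)) := by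
        simp only [Nseq, Gseq, wseq, map_mul, map_add, map_pow, map_sub, map_one, map_ofNat]
        ring
      rw [identity]
      exact hT.add_mem (hT.add_mem (hT.add_mem T1 T2) T3) T4
  | succ j ih =>
      have hx : Gseq s (j+2) = Gseq s (j+1) ^ 2 * (C (3 * wseq (j+1)) + Gseq s (j+1)) := rfl
      have hw'pos := wseq_pos (j+1)
      have hN'pos := Nseq_pos hδ (j+1)
      have hεpos : 0 ≤ 5 * lam * wseq j * (Nseq δ j) ^ 2 := by
        have := wseq_pos j
        positivity
      have S1 : (C 3 * (C (wseq (j+1)) * (Gseq s (j+1) ^ 2 * (C lam + b))) : A n) ∈ T :=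
        hT.C_mul_mem (by norm_num) (hT.C_mul_mem hw'pos.le (hT.sq_mul_mem _ hb2))
      have S2 : (C (3 * lam * wseq (j+1))
          * ((C (Nseq δ (j+1)) - Gseq s (j+1)) * (C (Nseq δ (j+1)) + Gseq s (j+1))) : A n) ∈ T :=
        hT.C_mul_mem (mul_nonneg (mul_nonneg (by norm_num) hlam.le) hw'pos.le) (hprodC (j+1))
      have S3 : (Gseq s (j+1) ^ 2 * (Gseq s (j+1) * b + C (5 * lam * wseq j * (Nseq δ j) ^ 2)) : A n)
          ∈ T := hT.sq_mul_mem _ ih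
      have S4 : (C (5 * lam * wseq j * (Nseq δ j) ^ 2)
          * ((C (Nseq δ (j+1)) - Gseq s (j+1)) * (C (Nseq δ (j+1)) + Gseq s (j+1))) : A n) ∈ T :=
        hT.C_mul_mem hεpos (hprodC (j+1))
      have identity : (Gseq s (j+2) * b
            + C ((Nseq δ (j+1)) ^ 2 * (3 * lam * wseq (j+1) + 5 * lam * wseq j * (Nseq δ j) ^ 2))
              : A n)
          = C 3 * (C (wseq (j+1)) * (Gseq s (j+1) ^ 2 * (C lam + b)))
            + C (3 * lam * wseq (j+1))
              * ((C (Nseq δ (j+1)) - Gseq s (j+1)) * (C (Nseq δ (j+1)) + Gseq s (j+1)))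
            + Gseq s (j+1) ^ 2 * (Gseq s (j+1) * b + C (5 * lam * wseq j * (Nseq δ j) ^ 2))
            + C (5 * lam * wseq j * (Nseq δ j) ^ 2)
              * ((C (Nseq δ (j+1)) - Gseq s (j+1)) * (C (Nseq δ (j+1)) + Gseq s (j+1))) := by
        rw [hx]
        simp only [map_mul, map_add, map_pow, map_ofNat]
        ring
      have hmem : (Gseq s (j+2) * b
          + C ((Nseq δ (j+1)) ^ 2 * (3 * lam * wseq (j+1) + 5 * lam * wseq j * (Nseq δ j) ^ 2))
            : A n) ∈ T := by
        rw [identity]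
        exact hT.add_mem (hT.add_mem (hT.add_mem S1 S2) S3) S4
      refine mem_weaken hT hmem ?_
      have h1 : 5 * lam * wseq j * (Nseq δ j) ^ 2 ≤ 2 * lam * wseq (j+1) := by
        have h2 := Nseq_le_wseq hδ0 hδ j
        have h3 := (Nseq_pos hδ j).le
        have h4 := wseq_pos j
        have h5 : wseq (j+1) = 4 * (wseq j) ^ 3 := rfl
        have hNN : Nseq δ j ^ 2 ≤ wseq j ^ 2 := by nlinarith
        have hmul := mul_le_mul_of_nonneg_left hNN
          (by positivity : (0:ℝ) ≤ 5 * lam * wseq j)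
        rw [h5]
        nlinarith [mul_pos hlam (pow_pos h4 3)]
      nlinarith [mul_le_mul_of_nonneg_left h1 (sq_nonneg (Nseq δ (j+1)))]

/-- The extraction lemma: from `s*b ∈ T` with `s` an SOS bounded between `δ` and `1`,
and `b` bounded, conclude `b + ε ∈ T` for every positive `ε`. -/
lemma extraction (hT : IsQM T) (hs : IsSOS s) (hδ0 : 0 < δ) (hδ : δ < 1) (hlam : 0 < lam)
    (hv : (1 : A n) - s ∈ T) (hu : s - C δ ∈ T)
    (hb1 : C lam - b ∈ T) (hb2 : C lam + b ∈ T) (hsb : s * b ∈ T) :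
    ∀ ε : ℝ, 0 < ε → b + C ε ∈ T := by
  intro ε hε
  set θ := (1 - δ) * (4 - δ) / 4 with hθdef
  have hθ0 : 0 ≤ θ := by rw [hθdef]; nlinarith
  have hθ1 : θ < 1 := by rw [hθdef]; nlinarith
  obtain ⟨j, hj⟩ := exists_pow_lt_of_lt_one
    (show (0:ℝ) < 4 * ε / (5 * lam) by positivity) hθ1
  have hρ := (ratio_le_pow hδ0 hδ j).1
  have hwj := wseq_pos j
  have hNj := Nseq_pos hδ j
  have hθj1 : θ ^ j ≤ 1 := pow_le_one₀ hθ0 (le_of_lt hθ1)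
  have hθjpos : 0 ≤ θ ^ j := pow_nonneg hθ0 j
  have hcond : 5 * lam * wseq j * (Nseq δ j) ^ 2 ≤ wseq (j+1) * ε := by
    have hN : Nseq δ j ≤ θ ^ j * wseq j := by
      rw [div_le_iff₀ hwj] at hρ
      linarith
    have hsq : (Nseq δ j) ^ 2 ≤ θ ^ j * (wseq j) ^ 2 := by
      have a1 : Nseq δ j ^ 2 ≤ (θ ^ j * wseq j) ^ 2 := by
        nlinarith [mul_le_mul hN hN hNj.le (mul_nonneg hθjpos hwj.le)]
      have a3 : θ ^ j * θ ^ j ≤ θ ^ j := by nlinarith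
      nlinarith [mul_le_mul_of_nonneg_right a3 (sq_nonneg (wseq j))]
    have hw' : wseq (j+1) = 4 * (wseq j) ^ 3 := rfl
    rw [hw']
    have key : 5 * lam * (θ ^ j) < 4 * ε := by
      rw [lt_div_iff₀ (by positivity : (0:ℝ) < 5 * lam)] at hj
      linarith [hj]
    nlinarith [mul_le_mul_of_nonneg_left hsq (by positivity : (0:ℝ) ≤ 5 * lam * wseq j),
      mul_lt_mul_of_pos_right key (pow_pos hwj 3)]
  have hmain := Gseq_main hT hs hδ0 hδ hlam hv hu hb1 hb2 hsb j
  have hGb := Gseq_b_mem hT hv hsb (j+1)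
  have hw'pos := wseq_pos (j+1)
  have hwrel : (C ((wseq (j+1))⁻¹) : A n) * C (wseq (j+1)) = 1 := by
    rw [← map_mul, inv_mul_cancel₀ hw'pos.ne', map_one]
  have identity : (b + C ε : A n)
      = C ((wseq (j+1))⁻¹) * ((C (wseq (j+1)) - Gseq s (j+1)) * b
          + (Gseq s (j+1) * b + C (5 * lam * wseq j * (Nseq δ j) ^ 2))
          + C (wseq (j+1) * ε - 5 * lam * wseq j * (Nseq δ j) ^ 2)) := by
    simp only [map_mul, map_sub]
    linear_combination (-(b + C ε)) * hwrel
  rw [identity]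
  exact hT.C_mul_mem (by positivity)
    (hT.add_mem (hT.add_mem hGb hmain) (hT.C_mem (by linarith)))

end Extraction

section Crucial

variable {l : ℕ} {h : Fin l → A n} {T : Set (A n)}

lemma isSOS_C_mul {c : ℝ} (hc : 0 ≤ c) {p : A n} (hp : IsSOS p) : IsSOS (C c * p) := by
  have e : (C c : A n) = C (Real.sqrt c) ^ 2 := by rw [← map_pow, Real.sq_sqrt hc]
  rw [e]; exact isSOS_sq_mul _ hp

/-- The crucial lemma: if `T ⊇ M` is a quadratic module and `s*y ∈ 1 + T` with `s` SOS,
then `y ∈ T`. -/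
lemma crucial (harch : ∃ N : ℝ, (C N - ∑ j, (X j : A n) ^ 2) ∈ Mset h)
    (hT : IsQM T) (hMT : Mset h ⊆ T)
    {s y : A n} (hs : IsSOS s) (hsy : s * y - 1 ∈ T) : y ∈ T := by
  obtain ⟨lam, hlam, hy1, hy2⟩ := bdd_all harch y
  obtain ⟨k0, hk0, hk1, hk2⟩ := bdd_all harch s
  set k := k0 + lam⁻¹ + 1 with hkdef
  have hkpos : 0 < k := by positivity
  have hkk : (C (k⁻¹) : A n) * C k = 1 := by
    rw [← map_mul, inv_mul_cancel₀ hkpos.ne', map_one]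
  have hll : (C (lam⁻¹) : A n) * C lam = 1 := by
    rw [← map_mul, inv_mul_cancel₀ hlam.ne', map_one]
  have hks : (C k - s : A n) ∈ T := by
    have e : (C k - s : A n) = C (lam⁻¹ + 1) + (C k0 - s) := by
      rw [hkdef]; simp only [map_add]; ring
    rw [e]
    exact hT.add_mem (hT.C_mem (by positivity)) (hMT hk1)
  have hlow : (C lam * s - 1 : A n) ∈ T := by
    have e : (C lam * s - 1 : A n) = s * (C lam - y) + (s * y - 1) := by ring
    rw [e]; exact hT.add_mem (hT.sos_mul_mem hs (hMT hy1)) hsy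
  set s' := C (k⁻¹) * s with hs'def
  have hs'sos : IsSOS s' := isSOS_C_mul (by positivity) hs
  have hv : (1 : A n) - s' ∈ T := by
    have e : ((1 : A n) - s') = C (k⁻¹) * (C k - s) := by
      rw [hs'def]
      linear_combination -hkk
    rw [e]; exact hT.C_mul_mem (by positivity) hks
  set δ := (k * lam)⁻¹ with hδdef
  have hδ0 : 0 < δ := by rw [hδdef]; positivity
  have hδ1 : δ < 1 := by
    rw [hδdef]
    rw [inv_lt_one_iff₀]
    right
    have : k * lam = k0 * lam + 1 + lam := by
      rw [hkdef]; field_simp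
    rw [this]
    nlinarith [mul_pos hk0 hlam]
  have hu : s' - C δ ∈ T := by
    have e : (s' - C δ : A n) = C (k⁻¹) * (C (lam⁻¹) * (C lam * s - 1)) := by
      rw [hs'def, hδdef, mul_inv, map_mul]
      linear_combination (-(C (k⁻¹) * s)) * hll
    rw [e]
    exact hT.C_mul_mem (by positivity) (hT.C_mul_mem (by positivity) hlow)
  set b := y - C (k⁻¹) with hbdef
  have hsb : s' * b ∈ T := by
    have e : (s' * b : A n)
        = C (k⁻¹) * (s * y - 1) + C (k⁻¹) * ((1 : A n) - s') := by
      rw [hs'def, hbdef]; ring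
    rw [e]
    exact hT.add_mem (hT.C_mul_mem (by positivity) hsy) (hT.C_mul_mem (by positivity) hv)
  set lam' := lam + k⁻¹ with hlam'def
  have hlam' : 0 < lam' := by rw [hlam'def]; positivity
  have hb1 : (C lam' - b : A n) ∈ T := by
    have e : (C lam' - b : A n) = (C lam - y) + C (k⁻¹ + k⁻¹) := by
      rw [hlam'def, hbdef]; simp only [map_add]; ring
    rw [e]; exact hT.add_mem (hMT hy1) (hT.C_mem (by positivity))
  have hb2 : (C lam' + b : A n) ∈ T := by
    have e : (C lam' + b : A n) = C lam + y := by
      rw [hlam'def, hbdef]; simp only [map_add]; ring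
    rw [e]; exact hMT hy2
  have hfin := extraction hT hs'sos hδ0 hδ1 hlam' hv hu hb1 hb2 hsb (k⁻¹) (by positivity)
  have e : (b + C (k⁻¹) : A n) = y := by rw [hbdef]; ring
  rwa [e] at hfin

end Crucial

section Phi

variable {T : Set (A n)}

/-- The state associated to a proper quadratic module. -/
noncomputable def phi (T : Set (A n)) (x : A n) : ℝ := sInf {r : ℝ | C r - x ∈ T}

variable (hT : IsQM T) (hproper : (-1 : A n) ∉ T)
  (hbdd : ∀ f : A n, ∃ c : ℝ, 0 < c ∧ C c - f ∈ T ∧ C c + f ∈ T)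

lemma Cmem_nonneg (hT : IsQM T) (hproper : (-1 : A n) ∉ T) {c : ℝ} (hc : (C c : A n) ∈ T) :
    0 ≤ c := by
  by_contra hneg
  push_neg at hneg
  apply hproper
  have key : ((-1 : A n)) = C ((-c)⁻¹) * C c := by
    rw [← map_mul]
    have : (-c)⁻¹ * c = -1 := by
      rw [inv_neg, neg_mul, inv_mul_cancel₀ (ne_of_lt hneg)]
    rw [this, map_neg, map_one]
  rw [key]
  exact hT.C_mul_mem (inv_nonneg.mpr (by linarith)) hc

lemma phi_set_nonempty (hbdd : ∀ f : A n, ∃ c : ℝ, 0 < c ∧ C c - f ∈ T ∧ C c + f ∈ T)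
    (x : A n) : {r : ℝ | C r - x ∈ T}.Nonempty := by
  obtain ⟨c, _, h1, _⟩ := hbdd x
  exact ⟨c, h1⟩

lemma phi_set_bddBelow (hT : IsQM T) (hproper : (-1 : A n) ∉ T)
    (hbdd : ∀ f : A n, ∃ c : ℝ, 0 < c ∧ C c - f ∈ T ∧ C c + f ∈ T)
    (x : A n) : BddBelow {r : ℝ | C r - x ∈ T} := by
  obtain ⟨c, _, _, h2⟩ := hbdd x
  refine ⟨-c, fun r hr => ?_⟩
  have hmem : (C (r + c) : A n) ∈ T := by
    have e : (C (r + c) : A n) = (C r - x) + (C c + x) := by rw [map_add]; ring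
    rw [e]; exact hT.add_mem hr h2
  have := Cmem_nonneg hT hproper hmem
  linarith

lemma phi_le (hT : IsQM T) (hproper : (-1 : A n) ∉ T)
    (hbdd : ∀ f : A n, ∃ c : ℝ, 0 < c ∧ C c - f ∈ T ∧ C c + f ∈ T)
    {x : A n} {r : ℝ} (hr : C r - x ∈ T) : phi T x ≤ r :=
  csInf_le (phi_set_bddBelow hT hproper hbdd x) hr

lemma mem_of_phi_lt (hT : IsQM T) (hproper : (-1 : A n) ∉ T)
    (hbdd : ∀ f : A n, ∃ c : ℝ, 0 < c ∧ C c - f ∈ T ∧ C c + f ∈ T)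
    {x : A n} {r : ℝ} (hr : phi T x < r) : C r - x ∈ T := by
  obtain ⟨a, ha, halt⟩ := exists_lt_of_csInf_lt (phi_set_nonempty hbdd x) hr
  have e : (C r - x : A n) = C (r - a) + (C a - x) := by rw [map_sub]; ring
  rw [e]
  exact hT.add_mem (hT.C_mem (by linarith)) ha

lemma phi_nonneg_of_mem (hT : IsQM T) (hproper : (-1 : A n) ∉ T)
    (hbdd : ∀ f : A n, ∃ c : ℝ, 0 < c ∧ C c - f ∈ T ∧ C c + f ∈ T)
    {x : A n} (hx : x ∈ T) : 0 ≤ phi T x := by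
  refine le_csInf (phi_set_nonempty hbdd x) (fun r hr => ?_)
  have hmem : (C r : A n) ∈ T := by
    have e : (C r : A n) = (C r - x) + x := by ring
    rw [e]; exact hT.add_mem hr hx
  exact Cmem_nonneg hT hproper hmem

lemma phi_C (hT : IsQM T) (hproper : (-1 : A n) ∉ T)
    (hbdd : ∀ f : A n, ∃ c : ℝ, 0 < c ∧ C c - f ∈ T ∧ C c + f ∈ T)
    (c : ℝ) : phi T (C c) = c := by
  apply le_antisymm
  · exact phi_le hT hproper hbdd (by rw [sub_self]; exact hT.zero_mem)
  · refine le_csInf (phi_set_nonempty hbdd _) (fun r hr => ?_)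
    have : (C (r - c) : A n) ∈ T := by rw [map_sub]; exact hr
    have := Cmem_nonneg hT hproper this
    linarith

lemma phi_zero (hT : IsQM T) (hproper : (-1 : A n) ∉ T)
    (hbdd : ∀ f : A n, ∃ c : ℝ, 0 < c ∧ C c - f ∈ T ∧ C c + f ∈ T) :
    phi T 0 = 0 := by
  have := phi_C hT hproper hbdd 0
  simpa using this

variable (hsemi : ∀ y : A n, y ∈ T ∨ -y ∈ T)

lemma phi_add (hT : IsQM T) (hproper : (-1 : A n) ∉ T)
    (hbdd : ∀ f : A n, ∃ c : ℝ, 0 < c ∧ C c - f ∈ T ∧ C c + f ∈ T)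
    (hsemi : ∀ y : A n, y ∈ T ∨ -y ∈ T)
    (x y : A n) : phi T (x + y) = phi T x + phi T y := by
  apply le_antisymm
  · apply le_of_forall_pos_le_add
    intro ε hε
    have hmem : (C ((phi T x + ε/2) + (phi T y + ε/2)) - (x + y) : A n) ∈ T := by
      have e : (C ((phi T x + ε/2) + (phi T y + ε/2)) - (x + y) : A n)
          = (C (phi T x + ε/2) - x) + (C (phi T y + ε/2) - y) := by
        simp only [map_add]; ring
      rw [e]
      exact hT.add_mem (mem_of_phi_lt hT hproper hbdd (by linarith))
        (mem_of_phi_lt hT hproper hbdd (by linarith))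
    have := phi_le hT hproper hbdd hmem
    linarith
  · by_contra hlt
    push_neg at hlt
    set gap := phi T x + phi T y - phi T (x + y) with hgap
    have hgappos : 0 < gap := by rw [hgap]; linarith
    have h1 : C (phi T (x + y) + gap/4) - (x + y) ∈ T :=
      mem_of_phi_lt hT hproper hbdd (by linarith)
    have h2 : x - C (phi T x - gap/4) ∈ T := by
      rcases hsemi (C (phi T x - gap/4) - x) with hin | hin
      · exact absurd (phi_le hT hproper hbdd hin) (by linarith)
      · simpa using hin
    have h3 : y - C (phi T y - gap/4) ∈ T := by
      rcases hsemi (C (phi T y - gap/4) - y) with hin | hin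
      · exact absurd (phi_le hT hproper hbdd hin) (by linarith)
      · simpa using hin
    have hsum : (C (phi T (x + y) + gap/4 - (phi T x - gap/4) - (phi T y - gap/4)) : A n) ∈ T := by
      have e : (C (phi T (x + y) + gap/4 - (phi T x - gap/4) - (phi T y - gap/4)) : A n)
          = (C (phi T (x + y) + gap/4) - (x + y)) + (x - C (phi T x - gap/4))
            + (y - C (phi T y - gap/4)) := by
        simp only [map_sub, map_add]; ring
      rw [e]
      exact hT.add_mem (hT.add_mem h1 h2) h3
    have := Cmem_nonneg hT hproper hsum
    rw [hgap] at this
    linarith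

lemma phi_neg (hT : IsQM T) (hproper : (-1 : A n) ∉ T)
    (hbdd : ∀ f : A n, ∃ c : ℝ, 0 < c ∧ C c - f ∈ T ∧ C c + f ∈ T)
    (hsemi : ∀ y : A n, y ∈ T ∨ -y ∈ T)
    (x : A n) : phi T (-x) = - phi T x := by
  have := phi_add hT hproper hbdd hsemi x (-x)
  simp only [add_neg_cancel] at this
  rw [phi_zero hT hproper hbdd] at this
  linarith

lemma phi_C_mul_le (hT : IsQM T) (hproper : (-1 : A n) ∉ T)
    (hbdd : ∀ f : A n, ∃ c : ℝ, 0 < c ∧ C c - f ∈ T ∧ C c + f ∈ T)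
    {c : ℝ} (hc : 0 < c) (x : A n) : phi T (C c * x) ≤ c * phi T x := by
  apply le_of_forall_pos_le_add
  intro ε hε
  have hmem : (C (c * (phi T x + ε/c)) - C c * x : A n) ∈ T := by
    have e : (C (c * (phi T x + ε/c)) - C c * x : A n)
        = C c * (C (phi T x + ε/c) - x) := by
      rw [map_mul]; ring
    rw [e]
    exact hT.C_mul_mem hc.le
      (mem_of_phi_lt hT hproper hbdd (by have := div_pos hε hc; linarith))
  have h1 := phi_le hT hproper hbdd hmem
  have h2 : c * (phi T x + ε/c) = c * phi T x + ε := by field_simp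
  linarith [h2 ▸ h1]

lemma phi_C_mul_pos (hT : IsQM T) (hproper : (-1 : A n) ∉ T)
    (hbdd : ∀ f : A n, ∃ c : ℝ, 0 < c ∧ C c - f ∈ T ∧ C c + f ∈ T)
    {c : ℝ} (hc : 0 < c) (x : A n) : phi T (C c * x) = c * phi T x := by
  apply le_antisymm (phi_C_mul_le hT hproper hbdd hc x)
  have hx : (x : A n) = C c⁻¹ * (C c * x) := by
    rw [← mul_assoc, ← map_mul, inv_mul_cancel₀ hc.ne', map_one, one_mul]
  have h3 := phi_C_mul_le hT hproper hbdd (c := c⁻¹) (by positivity) (C c * x)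
  rw [← hx] at h3
  have h4 := mul_le_mul_of_nonneg_left h3 hc.le
  have h5 : c * (c⁻¹ * phi T (C c * x)) = phi T (C c * x) := by
    field_simp
  linarith [h5 ▸ h4]

lemma phi_C_mul (hT : IsQM T) (hproper : (-1 : A n) ∉ T)
    (hbdd : ∀ f : A n, ∃ c : ℝ, 0 < c ∧ C c - f ∈ T ∧ C c + f ∈ T)
    (hsemi : ∀ y : A n, y ∈ T ∨ -y ∈ T)
    (c : ℝ) (x : A n) : phi T (C c * x) = c * phi T x := by
  rcases lt_trichotomy c 0 with hneg | hzero | hpos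
  · have e2 : (C c * x : A n) = C (-c) * (-x) := by rw [map_neg]; ring
    rw [e2, phi_C_mul_pos hT hproper hbdd (by linarith) (-x),
      phi_neg hT hproper hbdd hsemi x]
    ring
  · subst hzero
    simp only [map_zero, zero_mul]
    rw [phi_zero hT hproper hbdd]
  · exact phi_C_mul_pos hT hproper hbdd hpos x

lemma phi_sub (hT : IsQM T) (hproper : (-1 : A n) ∉ T)
    (hbdd : ∀ f : A n, ∃ c : ℝ, 0 < c ∧ C c - f ∈ T ∧ C c + f ∈ T)
    (hsemi : ∀ y : A n, y ∈ T ∨ -y ∈ T)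
    (x y : A n) : phi T (x - y) = phi T x - phi T y := by
  have e : (x - y : A n) = x + (-y) := by ring
  rw [e, phi_add hT hproper hbdd hsemi, phi_neg hT hproper hbdd hsemi]
  ring

lemma phi_sq (hT : IsQM T) (hproper : (-1 : A n) ∉ T)
    (hbdd : ∀ f : A n, ∃ c : ℝ, 0 < c ∧ C c - f ∈ T ∧ C c + f ∈ T)
    (hsemi : ∀ y : A n, y ∈ T ∨ -y ∈ T)
    (x : A n) : phi T (x ^ 2) = (phi T x) ^ 2 := by
  set a := phi T x with ha
  set z := x - C a with hz
  have hza : phi T z = 0 := by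
    rw [hz, phi_sub hT hproper hbdd hsemi, phi_C hT hproper hbdd]
    ring
  have hznegphi : phi T (-z) = 0 := by
    rw [phi_neg hT hproper hbdd hsemi, hza, neg_zero]
  have hub : ∀ ε : ℝ, 0 < ε → phi T (z ^ 2) ≤ ε ^ 2 := by
    intro ε hε
    have A1 : C ε - z ∈ T := mem_of_phi_lt hT hproper hbdd (by rw [hza]; exact hε)
    have A2 : C ε + z ∈ T := by
      have := mem_of_phi_lt hT hproper hbdd (x := -z) (r := ε) (by rw [hznegphi]; exact hε)
      simpa using this
    have hprod : (C ε - z) * (C ε + z) ∈ T := by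
      refine hT.prodM A1 A2 (c := ε + ε) ?_ (by linarith)
      rw [map_add]; ring
    have e : (C ε - z) * (C ε + z) = C (ε ^ 2) - z ^ 2 := by
      rw [map_pow]; ring
    rw [e] at hprod
    exact phi_le hT hproper hbdd hprod
  have hle : phi T (z ^ 2) ≤ 0 := by
    by_contra hq
    push_neg at hq
    set ε := min 1 (phi T (z ^ 2) / 2) with hεdef
    have hεpos : 0 < ε := lt_min one_pos (by linarith)
    have h2 := hub ε hεpos
    have h3 : ε ≤ 1 := min_le_left _ _
    have h4 : ε ≤ phi T (z ^ 2) / 2 := min_le_right _ _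
    nlinarith
  have hge : 0 ≤ phi T (z ^ 2) := phi_nonneg_of_mem hT hproper hbdd (hT.sq_mem z)
  have hz2 : phi T (z ^ 2) = 0 := le_antisymm hle hge
  have expand : (x ^ 2 : A n) = z ^ 2 + C (2 * a) * z + C (a ^ 2) := by
    rw [hz]
    simp only [map_mul, map_pow, map_ofNat]
    ring
  rw [expand, phi_add hT hproper hbdd hsemi, phi_add hT hproper hbdd hsemi,
    phi_C hT hproper hbdd, phi_C_mul hT hproper hbdd hsemi, hz2, hza]
  ring

lemma phi_mul (hT : IsQM T) (hproper : (-1 : A n) ∉ T)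
    (hbdd : ∀ f : A n, ∃ c : ℝ, 0 < c ∧ C c - f ∈ T ∧ C c + f ∈ T)
    (hsemi : ∀ y : A n, y ∈ T ∨ -y ∈ T)
    (x y : A n) : phi T (x * y) = phi T x * phi T y := by
  have h2 : (C ((2:ℝ)⁻¹) : A n) * 2 = 1 := by
    have hC2 : ((2 : A n)) = C (2:ℝ) := (map_ofNat C 2).symm
    rw [hC2, ← map_mul, inv_mul_cancel₀ (by norm_num), map_one]
  have e : (x * y : A n) = C ((2:ℝ)⁻¹) * ((x + y) ^ 2 - x ^ 2 - y ^ 2) := by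
    linear_combination (-(x * y)) * h2
  rw [e, phi_C_mul hT hproper hbdd hsemi,
    phi_sub hT hproper hbdd hsemi, phi_sub hT hproper hbdd hsemi,
    phi_sq hT hproper hbdd hsemi, phi_sq hT hproper hbdd hsemi,
    phi_sq hT hproper hbdd hsemi, phi_add hT hproper hbdd hsemi]
  ring

lemma phi_eval (hT : IsQM T) (hproper : (-1 : A n) ∉ T)
    (hbdd : ∀ f : A n, ∃ c : ℝ, 0 < c ∧ C c - f ∈ T ∧ C c + f ∈ T)
    (hsemi : ∀ y : A n, y ∈ T ∨ -y ∈ T)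
    (f : A n) : phi T f = eval (fun j => phi T (X j)) f := by
  induction f using MvPolynomial.induction_on with
  | C a => rw [phi_C hT hproper hbdd]; simp
  | add p q hp hq =>
      rw [phi_add hT hproper hbdd hsemi, hp, hq]; simp
  | mul_X p i hp =>
      rw [phi_mul hT hproper hbdd hsemi, hp]; simp

end Phi

section Main

variable {l : ℕ} {h : Fin l → A n}

lemma semiordering_of_maximal (harch : ∃ N : ℝ, (C N - ∑ j, (X j : A n) ^ 2) ∈ Mset h)
    {T : Set (A n)} (hT : IsQM T) (hMT : Mset h ⊆ T) (hproper : (-1 : A n) ∉ T)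
    (hmax : ∀ T' : Set (A n), IsQM T' → T ⊆ T' → (-1 : A n) ∉ T' → T' = T) :
    ∀ y : A n, y ∈ T ∨ -y ∈ T := by
  intro y
  by_cases hy : y ∈ T
  · exact Or.inl hy
  right
  set T' : Set (A n) := {x : A n | ∃ t ∈ T, ∃ q : A n, IsSOS q ∧ x = t + q * y} with hT'def
  have hQM' : IsQM T' := by
    constructor
    · rintro a b ⟨t1, ht1, q1, hq1, rfl⟩ ⟨t2, ht2, q2, hq2, rfl⟩
      exact ⟨t1 + t2, hT.add_mem ht1 ht2, q1 + q2, isSOS_add hq1 hq2, by ring⟩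
    · rintro f a ⟨t, ht, q, hq, rfl⟩
      exact ⟨f ^ 2 * t, hT.sq_mul_mem f ht, f ^ 2 * q, isSOS_sq_mul f hq, by ring⟩
    · intro f
      exact ⟨f ^ 2, hT.sq_mem f, 0, isSOS_zero, by ring⟩
  have hTT' : T ⊆ T' := fun t ht => ⟨t, ht, 0, isSOS_zero, by ring⟩
  have hyT' : y ∈ T' := ⟨0, hT.zero_mem, 1, isSOS_one, by ring⟩
  have hne : T' ≠ T := fun he => hy (he ▸ hyT')
  have h1 : (-1 : A n) ∈ T' := by
    by_contra hno
    exact hne (hmax T' hQM' hTT' hno)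
  obtain ⟨t, ht, q, hq, heq⟩ := h1
  have hkey : q * (-y) - 1 ∈ T := by
    have e : q * (-y) - 1 = t := by linear_combination heq
    rw [e]; exact ht
  exact crucial harch hT hMT hq hkey

/-- Main auxiliary theorem: Putinar's Positivstellensatz, in terms of `Mset`. -/
theorem putinar_aux (harch : ∃ N : ℝ, (C N - ∑ j, (X j : A n) ^ 2) ∈ Mset h)
    (p : A n)
    (hpos : ∀ x : Fin n → ℝ, (∀ i, 0 ≤ eval x (h i)) → 0 < eval x p) :
    p ∈ Mset h := by
  classical
  by_cases hcase : ∃ m ∈ Mset h, ∃ q : A n, IsSOS q ∧ (-1 : A n) = m - q * p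
  · obtain ⟨m, hm, q, hq, heq⟩ := hcase
    have hkey : q * p - 1 ∈ Mset h := by
      have e : q * p - 1 = m := by linear_combination heq
      rw [e]; exact hm
    exact crucial harch (isQM_Mset h) (subset_refl _) hq hkey
  · exfalso
    -- the quadratic module generated by M and -p is proper
    set M₀ : Set (A n) := {x : A n | ∃ m ∈ Mset h, ∃ q : A n, IsSOS q ∧ x = m - q * p}
      with hM₀def
    have hQM₀ : IsQM M₀ := by
      constructor
      · rintro a b ⟨m1, hm1, q1, hq1, rfl⟩ ⟨m2, hm2, q2, hq2, rfl⟩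
        exact ⟨m1 + m2, (isQM_Mset h).add_mem hm1 hm2, q1 + q2, isSOS_add hq1 hq2, by ring⟩
      · rintro f a ⟨m, hm, q, hq, rfl⟩
        exact ⟨f ^ 2 * m, (isQM_Mset h).sq_mul_mem f hm, f ^ 2 * q, isSOS_sq_mul f hq,
          by ring⟩
      · intro f
        exact ⟨f ^ 2, (isQM_Mset h).sq_mem f, 0, isSOS_zero, by ring⟩
    have hMM₀ : Mset h ⊆ M₀ := fun m hm => ⟨m, hm, 0, isSOS_zero, by ring⟩
    have hproper₀ : (-1 : A n) ∉ M₀ := by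
      intro hmem
      obtain ⟨m, hm, q, hq, heq⟩ := hmem
      exact hcase ⟨m, hm, q, hq, heq⟩
    have hnegp : (-p : A n) ∈ M₀ := ⟨0, (isQM_Mset h).zero_mem, 1, isSOS_one, by ring⟩
    -- Zorn's lemma
    set S : Set (Set (A n)) := {U | IsQM U ∧ M₀ ⊆ U ∧ (-1 : A n) ∉ U} with hSdef
    have hM₀S : M₀ ∈ S := ⟨hQM₀, subset_refl _, hproper₀⟩
    have hchain : ∀ c ⊆ S, IsChain (· ⊆ ·) c → c.Nonempty →
        ∃ ub ∈ S, ∀ u ∈ c, u ⊆ ub := by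
      intro c hcS hchain ⟨U0, hU0⟩
      refine ⟨⋃₀ c, ⟨?_, ?_, ?_⟩, fun u hu => Set.subset_sUnion_of_mem hu⟩
      · constructor
        · rintro a b ha hb
          obtain ⟨U1, hU1c, ha1⟩ := ha
          obtain ⟨U2, hU2c, hb2⟩ := hb
          rcases hchain.total hU1c hU2c with hsub | hsub
          · exact ⟨U2, hU2c, (hcS hU2c).1.add_mem (hsub ha1) hb2⟩
          · exact ⟨U1, hU1c, (hcS hU1c).1.add_mem ha1 (hsub hb2)⟩
        · rintro f a ha
          obtain ⟨U1, hU1c, ha1⟩ := ha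
          exact ⟨U1, hU1c, (hcS hU1c).1.sq_mul_mem f ha1⟩
        · intro f
          exact ⟨U0, hU0, (hcS hU0).1.sq_mem f⟩
      · exact fun x hx => Set.mem_sUnion_of_mem ((hcS hU0).2.1 hx) hU0
      · rintro ⟨U1, hU1c, hbad⟩
        exact (hcS hU1c).2.2 hbad
    obtain ⟨T, hM₀T, hTmax⟩ := zorn_subset_nonempty S hchain M₀ hM₀S
    obtain ⟨hTQM, hTM₀, hTproper⟩ := hTmax.prop
    have hMT : Mset h ⊆ T := hMM₀.trans hTM₀
    have hmax' : ∀ T' : Set (A n), IsQM T' → T ⊆ T' → (-1 : A n) ∉ T' → T' = T := by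
      intro T' hQM' hsub hprop'
      exact hTmax.eq_of_ge ⟨hQM', hTM₀.trans hsub, hprop'⟩ hsub
    have hsemi := semiordering_of_maximal harch hTQM hMT hTproper hmax'
    have hbddT : ∀ f : A n, ∃ c : ℝ, 0 < c ∧ C c - f ∈ T ∧ C c + f ∈ T := by
      intro f
      obtain ⟨c, hc, h1, h2⟩ := bdd_all harch f
      exact ⟨c, hc, hMT h1, hMT h2⟩
    set v : Fin n → ℝ := fun j => phi T (X j) with hv
    have hK : ∀ i, 0 ≤ eval v (h i) := by
      intro i
      have := phi_nonneg_of_mem hTQM hTproper hbddT (hMT (h_mem_Mset h i))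
      rwa [phi_eval hTQM hTproper hbddT hsemi] at this
    have hple : eval v p ≤ 0 := by
      have hmem : (-p : A n) ∈ T := hTM₀ hnegp
      have h1 := phi_nonneg_of_mem hTQM hTproper hbddT hmem
      rw [phi_neg hTQM hTproper hbddT hsemi, phi_eval hTQM hTproper hbddT hsemi] at h1
      linarith
    exact absurd (hpos v hK) (not_lt.mpr hple)

end Main

end PutinarAux

/-- **Putinar's Positivstellensatz.** If the quadratic module `Q(h)` is
Archimedean and `p > 0` on `K = {x : h_i(x) ≥ 0 ∀ i}`, then `p ∈ Q(h)`. -/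
theorem putinar_positivstellensatz
    {n l : ℕ} (h : Fin l → MvPolynomial (Fin n) ℝ)
    (hArch : ∃ N : ℝ, memQuadraticModule h
      (MvPolynomial.C N - ∑ j, (MvPolynomial.X j : MvPolynomial (Fin n) ℝ) ^ 2))
    (p : MvPolynomial (Fin n) ℝ)
    (hpos : ∀ x : Fin n → ℝ,
      (∀ i, 0 ≤ MvPolynomial.eval x (h i)) → 0 < MvPolynomial.eval x p) :
    memQuadraticModule h p := by
  exact PutinarAux.putinar_aux hArch p hpos
end
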